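/- arXiv:1811.05824 — 5 statements merged into one kernel-verified Lean document; each statement's English description precedes it below -/
import Mathlib

section
/- Let K be a field of characteristic zero and let u(X) ∈ X·K⟦X⟧ be a power series with u'(0) neither 0 nor a root of unity. If h⁽¹⁾ and h⁽²⁾ are power series in K⟦X₁,...,X_d⟧ with h⁽ⁱ⁾(0)=0 satisfying h⁽ⁱ⁾ ∘ u = u ∘ h⁽ⁱ⁾ (composing u componentwise on inputs, i.e. h⁽ⁱ⁾(u(X₁),...,u(X_d)) = u(h⁽ⁱ⁾(X₁,...,X_d))), and if ∂h⁽¹⁾/∂X_i(0) = ∂h⁽²⁾/∂X_i(0) for all 1 ≤ i ≤ d, then h⁽¹⁾ = h⁽²⁾. -/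
open MvPowerSeries

/-- Substitution of `k` power series (each with zero constant term) into a
power series in `k` variables: the coefficient of a monomial `m` in
`f(g 0, ..., g (k-1))`. The sum is finite since each `g i` has zero constant term,
so only exponents `e` of total degree at most the degree of `m` contribute. -/
noncomputable def msubst {R : Type*} [CommRing R] {k l : ℕ}
    (f : MvPowerSeries (Fin k) R) (g : Fin k → MvPowerSeries (Fin l) R) :
    MvPowerSeries (Fin l) R :=
  fun m => ∑ e ∈ Finset.Iic (Finsupp.equivFunOnFinite.symm
      (fun _ : Fin k => m.sum fun _ n => n)),
    (MvPowerSeries.coeff e f) * MvPowerSeries.coeff m (∏ i, g i ^ e i)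

/-- One-variable power series, as multivariate power series in one variable. -/
abbrev PS (R : Type*) [CommRing R] := MvPowerSeries (Fin 1) R

/-- Composition `f ∘ g` of one-variable power series (`g` with zero constant term). -/
noncomputable def comp {R : Type*} [CommRing R] (f g : PS R) : PS R := msubst f ![g]

/-- The derivative at `0` of a one-variable power series, i.e. its linear coefficient. -/
noncomputable def d0 {R : Type*} [CommRing R] (f : PS R) : R :=
  MvPowerSeries.coeff (Finsupp.single 0 1) f

/-- The partial derivative at `0` in the `i`-th variable, i.e. the linear coefficient. -/
noncomputable def pd0 {R : Type*} [CommRing R] {d : ℕ} (h : MvPowerSeries (Fin d) R)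
    (i : Fin d) : R := MvPowerSeries.coeff (Finsupp.single i 1) h

/-- A one-variable power series `u ∈ X·R⟦X⟧` is stable if `u'(0)` is neither `0`
nor a root of unity. -/
def Stable {R : Type*} [CommRing R] (u : PS R) : Prop :=
  constantCoeff u = 0 ∧ d0 u ≠ 0 ∧ ∀ n : ℕ, 0 < n → (d0 u) ^ n ≠ 1

/-- `h ∘ (u, ..., u)` : substitution of the one-variable series `u` in each of
the `d` variables of `h`. -/
noncomputable def compEach {R : Type*} [CommRing R] {d : ℕ}
    (h : MvPowerSeries (Fin d) R) (u : PS R) : MvPowerSeries (Fin d) R :=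
  msubst h (fun i => msubst u ![MvPowerSeries.X i])

/-- `u ∘ h` : substitution of `h` into the one-variable series `u`. -/
noncomputable def substIn {R : Type*} [CommRing R] {d : ℕ}
    (u : PS R) (h : MvPowerSeries (Fin d) R) : MvPowerSeries (Fin d) R :=
  msubst u ![h]

namespace StmtAux



lemma sum_eq_degree {l : ℕ} (m : Fin l →₀ ℕ) : (m.sum fun _ n => n) = m.degree := rfl

lemma coeff_msubst {R : Type*} [CommRing R] {k l : ℕ}
    (f : MvPowerSeries (Fin k) R) (g : Fin k → MvPowerSeries (Fin l) R) (m : Fin l →₀ ℕ) :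
    MvPowerSeries.coeff m (msubst f g) =
      ∑ e ∈ Finset.Iic (Finsupp.equivFunOnFinite.symm (fun _ : Fin k => m.degree)),
        MvPowerSeries.coeff e f * MvPowerSeries.coeff m (∏ i, g i ^ e i) := rfl

lemma mem_E {k l : ℕ} (m : Fin l →₀ ℕ) (e : Fin k →₀ ℕ) :
    e ∈ Finset.Iic (Finsupp.equivFunOnFinite.symm (fun _ : Fin k => m.degree)) ↔
      ∀ i, e i ≤ m.degree := by
  rw [Finset.mem_Iic, Finsupp.le_def]
  simp [Finsupp.equivFunOnFinite_symm_apply_apply]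

lemma fin1_eq (e : Fin 1 →₀ ℕ) : e = Finsupp.single 0 (e 0) := by
  apply Finsupp.ext
  intro j
  rw [Subsingleton.elim j 0]
  simp

lemma degree_add {l : ℕ} (a b : Fin l →₀ ℕ) : (a + b).degree = a.degree + b.degree := by
  rw [← sum_eq_degree, ← sum_eq_degree, ← sum_eq_degree]
  exact Finsupp.sum_add_index' (fun _ => rfl) (fun _ _ _ => rfl)

lemma degree_single {l : ℕ} (i : Fin l) (k : ℕ) : (Finsupp.single i k).degree = k := by
  rw [← sum_eq_degree]
  exact Finsupp.sum_single_index rfl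

lemma degree_eq_sum_univ {l : ℕ} (m : Fin l →₀ ℕ) : m.degree = ∑ i, m i := by
  rw [Finsupp.degree]
  exact Finset.sum_subset (Finset.subset_univ _) (by simp)

section U

variable {R : Type*} [CommRing R] {d : ℕ}

open MvPowerSeries

lemma coeff_U (u : MvPowerSeries (Fin 1) R) (i : Fin d) (q : Fin d →₀ ℕ) :
    MvPowerSeries.coeff q (msubst u ![MvPowerSeries.X i]) =
      if q = Finsupp.single i (q i) then
        MvPowerSeries.coeff (Finsupp.single 0 (q i)) u else 0 := by
  classical
  rw [coeff_msubst]
  have hprod : ∀ e : Fin 1 →₀ ℕ, (∏ j, (![(MvPowerSeries.X i : MvPowerSeries (Fin d) R)] j) ^ e j)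
      = (MvPowerSeries.X i : MvPowerSeries (Fin d) R) ^ e 0 := by
    intro e
    rw [Fin.prod_univ_one]
    simp
  by_cases hq : q = Finsupp.single i (q i)
  · rw [if_pos hq]
    have hmem : Finsupp.single (0 : Fin 1) (q i) ∈ Finset.Iic
        (Finsupp.equivFunOnFinite.symm (fun _ : Fin 1 => q.degree)) := by
      rw [mem_E]
      intro j
      rw [Subsingleton.elim j 0]
      simp [Finsupp.le_degree i q]
    rw [Finset.sum_eq_single_of_mem _ hmem]
    · rw [hprod, MvPowerSeries.coeff_X_pow]
      simp only [Finsupp.single_eq_same]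
      rw [if_pos hq, mul_one]
    · intro b _ hb
      rw [hprod, MvPowerSeries.coeff_X_pow, if_neg, mul_zero]
      intro hqb
      apply hb
      have hbq : q i = b 0 := by rw [hqb]; simp
      exact (fin1_eq b).trans (by rw [hbq])
  · rw [if_neg hq]
    apply Finset.sum_eq_zero
    intro b _
    rw [hprod, MvPowerSeries.coeff_X_pow, if_neg, mul_zero]
    intro hqb
    apply hq
    have hbq : q i = b 0 := by rw [hqb]; simp
    exact hqb.trans (by rw [hbq])

end U
section UPow

variable {R : Type*} [CommRing R] {d : ℕ}

open MvPowerSeries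

lemma coeff_U_pow_supp (u : MvPowerSeries (Fin 1) R) (i : Fin d) (c : ℕ) :
    ∀ q : Fin d →₀ ℕ, q ≠ Finsupp.single i (q i) →
      MvPowerSeries.coeff q ((msubst u ![MvPowerSeries.X i]) ^ c) = 0 := by
  classical
  induction c with
  | zero =>
    intro q hq
    rw [pow_zero, MvPowerSeries.coeff_one, if_neg]
    intro h0
    exact hq (by rw [h0]; simp)
  | succ c ih =>
    intro q hq
    rw [pow_succ, MvPowerSeries.coeff_mul]
    apply Finset.sum_eq_zero
    intro p hp
    rw [Finset.HasAntidiagonal.mem_antidiagonal] at hp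
    by_cases hp1 : p.1 = Finsupp.single i (p.1 i)
    · by_cases hp2 : p.2 = Finsupp.single i (p.2 i)
      · exfalso
        apply hq
        rw [← Finsupp.support_subset_singleton] at hp1 hp2 ⊢
        rw [← hp]
        exact (Finsupp.support_add).trans (Finset.union_subset hp1 hp2)
      · rw [coeff_U, if_neg hp2, mul_zero]
    · rw [ih p.1 hp1, zero_mul]

lemma coeff_U_pow (u : MvPowerSeries (Fin 1) R)
    (hu0 : MvPowerSeries.constantCoeff u = 0) (i : Fin d) (c : ℕ) :
    (∀ k, k < c → MvPowerSeries.coeff (Finsupp.single i k)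
        ((msubst u ![MvPowerSeries.X i]) ^ c) = 0) ∧
      MvPowerSeries.coeff (Finsupp.single i c) ((msubst u ![MvPowerSeries.X i]) ^ c)
        = (MvPowerSeries.coeff (Finsupp.single 0 1) u) ^ c := by
  classical
  have hU : ∀ b : ℕ, MvPowerSeries.coeff (Finsupp.single i b) (msubst u ![MvPowerSeries.X i])
      = MvPowerSeries.coeff (Finsupp.single 0 b) u := by
    intro b
    rw [coeff_U, if_pos (by simp)]
    simp
  have hU0 : MvPowerSeries.coeff (Finsupp.single i 0) (msubst u ![MvPowerSeries.X i]) = 0 := by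
    rw [hU 0, Finsupp.single_zero, MvPowerSeries.coeff_zero_eq_constantCoeff_apply, hu0]
  induction c with
  | zero =>
    refine ⟨fun k hk => absurd hk (Nat.not_lt_zero k), ?_⟩
    rw [pow_zero, pow_zero, Finsupp.single_zero, MvPowerSeries.coeff_one, if_pos rfl]
  | succ c ih =>
    have key : ∀ k : ℕ, MvPowerSeries.coeff (Finsupp.single i k)
        ((msubst u ![MvPowerSeries.X i]) ^ (c + 1)) =
        ∑ ab ∈ Finset.HasAntidiagonal.antidiagonal k,
          MvPowerSeries.coeff (Finsupp.single i ab.1) ((msubst u ![MvPowerSeries.X i]) ^ c) *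
          MvPowerSeries.coeff (Finsupp.single i ab.2) (msubst u ![MvPowerSeries.X i]) := by
      intro k
      rw [pow_succ, MvPowerSeries.coeff_mul, Finsupp.antidiagonal_single, Finset.sum_map]
      rfl
    constructor
    · intro k hk
      rw [key k]
      apply Finset.sum_eq_zero
      intro ab hab
      rw [Finset.HasAntidiagonal.mem_antidiagonal] at hab
      rcases Nat.eq_zero_or_pos ab.2 with hb | hb
      · rw [hb, hU0, mul_zero]
      · have : ab.1 < c := by omega
        rw [ih.1 ab.1 this, zero_mul]
    · rw [key (c + 1)]
      rw [Finset.sum_eq_single_of_mem (c, 1)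
        (by rw [Finset.HasAntidiagonal.mem_antidiagonal])]
      · rw [ih.2, hU 1, pow_succ]
      · intro ab hab hne
        rw [Finset.HasAntidiagonal.mem_antidiagonal] at hab
        rcases Nat.eq_zero_or_pos ab.2 with hb | hb
        · rw [hb, hU0, mul_zero]
        · have h1 : ab.1 < c ∨ (ab.1 = c ∧ ab.2 = 1) := by omega
          rcases h1 with h1 | ⟨h1, h2⟩
          · rw [ih.1 ab.1 h1, zero_mul]
          · exact absurd (Prod.ext h1 h2) hne
end UPow
section Sep

variable {R : Type*} [CommRing R] {d : ℕ}

open MvPowerSeries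

lemma coeff_prod_sep (f : Fin d → MvPowerSeries (Fin d) R)
    (hf : ∀ i q, q ≠ Finsupp.single i (q i) → MvPowerSeries.coeff q (f i) = 0)
    (s : Finset (Fin d)) (m : Fin d →₀ ℕ) :
    MvPowerSeries.coeff m (∏ i ∈ s, f i) =
      if m.support ⊆ s then ∏ i ∈ s, MvPowerSeries.coeff (Finsupp.single i (m i)) (f i)
      else 0 := by
  classical
  induction s using Finset.induction_on generalizing m with
  | empty =>
    rw [Finset.prod_empty, MvPowerSeries.coeff_one]
    by_cases hm : m = 0
    · rw [if_pos hm, if_pos (by simp [hm]), Finset.prod_empty]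
    · rw [if_neg hm, if_neg (by simpa [Finset.subset_empty, Finsupp.support_eq_empty] using hm)]
  | @insert a s ha ih =>
    rw [Finset.prod_insert ha, MvPowerSeries.coeff_mul]
    have hmem : (Finsupp.single a (m a), m.erase a) ∈ Finset.HasAntidiagonal.antidiagonal m := by
      rw [Finset.HasAntidiagonal.mem_antidiagonal]
      exact Finsupp.single_add_erase a m
    rw [Finset.sum_eq_single_of_mem _ hmem]
    · rw [ih]
      by_cases hm : m.support ⊆ insert a s
      · have h1 : (m.erase a).support ⊆ s := by
          intro j hj
          rw [Finsupp.support_erase, Finset.mem_erase] at hj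
          rcases Finset.mem_insert.mp (hm hj.2) with h | h
          · exact absurd h hj.1
          · exact h
        rw [if_pos h1, if_pos hm, Finset.prod_insert ha]
        congr 1
        apply Finset.prod_congr rfl
        intro j hj
        have hja : j ≠ a := fun h => ha (h ▸ hj)
        rw [Finsupp.erase_ne hja]
      · rw [if_neg hm]
        obtain ⟨j, hj1, hj2⟩ := Finset.not_subset.mp hm
        have h1 : ¬(m.erase a).support ⊆ s := by
          intro hsub
          have hja : j ≠ a := fun h => hj2 (h ▸ Finset.mem_insert_self a s)
          have : j ∈ (m.erase a).support := by
            rw [Finsupp.support_erase, Finset.mem_erase]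
            exact ⟨hja, hj1⟩
          exact hj2 (Finset.mem_insert_of_mem (hsub this))
        rw [if_neg h1, mul_zero]
    · intro p hp hpne
      rw [Finset.HasAntidiagonal.mem_antidiagonal] at hp
      by_cases hp1 : p.1 = Finsupp.single a (p.1 a)
      · rw [ih]
        by_cases hp2 : p.2.support ⊆ s
        · exfalso
          apply hpne
          have hp2a : p.2 a = 0 := by
            rw [← Finsupp.notMem_support_iff]
            exact fun h => ha (hp2 h)
          have hma : m a = p.1 a := by
            rw [← hp]
            simp [hp2a]
          have e1 : p.1 = Finsupp.single a (m a) := by rw [hma]; exact hp1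
          have e2 : p.2 = m.erase a := by
            apply Finsupp.ext
            intro j
            by_cases hja : j = a
            · rw [hja, Finsupp.erase_same, hp2a]
            · rw [Finsupp.erase_ne hja, ← hp]
              have : p.1 j = 0 := by
                rw [hp1, Finsupp.single_eq_of_ne hja]
              simp [this]
          rw [Prod.ext_iff]
          exact ⟨e1, e2⟩
        · rw [if_neg hp2, mul_zero]
      · rw [hf a p.1 hp1, zero_mul]

end Sep
section CLem

variable {R : Type*} [CommRing R] {d : ℕ}

open MvPowerSeries

lemma coeff_prod_U (u : MvPowerSeries (Fin 1) R) (m e : Fin d →₀ ℕ) :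
    MvPowerSeries.coeff m (∏ i, (msubst u ![MvPowerSeries.X i]) ^ e i) =
      ∏ i, MvPowerSeries.coeff (Finsupp.single i (m i))
        ((msubst u ![MvPowerSeries.X i]) ^ e i) := by
  rw [coeff_prod_sep (fun i => (msubst u ![MvPowerSeries.X i]) ^ e i)
    (fun i q hq => coeff_U_pow_supp u i (e i) q hq) Finset.univ m,
    if_pos (Finset.subset_univ _)]

lemma C_eq_self (u : MvPowerSeries (Fin 1) R)
    (hu0 : MvPowerSeries.constantCoeff u = 0) (m : Fin d →₀ ℕ) :
    MvPowerSeries.coeff m (∏ i, (msubst u ![MvPowerSeries.X i]) ^ m i) =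
      (MvPowerSeries.coeff (Finsupp.single 0 1) u) ^ m.degree := by
  rw [coeff_prod_U]
  rw [Finset.prod_congr rfl (fun i _ => (coeff_U_pow u hu0 i (m i)).2)]
  rw [Finset.prod_pow_eq_pow_sum, ← degree_eq_sum_univ]

lemma C_eq_zero (u : MvPowerSeries (Fin 1) R)
    (hu0 : MvPowerSeries.constantCoeff u = 0) (m e : Fin d →₀ ℕ)
    (i : Fin d) (hlt : m i < e i) :
    MvPowerSeries.coeff m (∏ j, (msubst u ![MvPowerSeries.X j]) ^ e j) = 0 := by
  rw [coeff_prod_U]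
  exact Finset.prod_eq_zero (Finset.mem_univ i) ((coeff_U_pow u hu0 i (e i)).1 (m i) hlt)

lemma exists_lt (e m : Fin d →₀ ℕ) (hdeg : m.degree ≤ e.degree) (hne : e ≠ m) :
    ∃ i, m i < e i := by
  by_contra hcon
  push_neg at hcon
  have hlt : e.degree < m.degree := by
    rw [degree_eq_sum_univ, degree_eq_sum_univ]
    obtain ⟨j, hj⟩ : ∃ j, e j ≠ m j := by
      by_contra hc
      push_neg at hc
      exact hne (Finsupp.ext hc)
    exact Finset.sum_lt_sum (fun i _ => hcon i)
      ⟨j, Finset.mem_univ j, lt_of_le_of_ne (hcon j) hj⟩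
  omega

lemma pow_coeff_eq (h₁ h₂ : MvPowerSeries (Fin d) R) (n : ℕ)
    (h₁0 : MvPowerSeries.constantCoeff h₁ = 0)
    (h₂0 : MvPowerSeries.constantCoeff h₂ = 0)
    (hlow : ∀ q : Fin d →₀ ℕ, q.degree < n →
      MvPowerSeries.coeff q h₁ = MvPowerSeries.coeff q h₂) :
    ∀ (k : ℕ) (q : Fin d →₀ ℕ), q.degree ≤ n → (q.degree < n ∨ k ≠ 1) →
      MvPowerSeries.coeff q (h₁ ^ k) = MvPowerSeries.coeff q (h₂ ^ k) := by
  classical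
  intro k
  induction k with
  | zero => intro q _ _; rw [pow_zero, pow_zero]
  | succ k ihk =>
    intro q hqn hcase
    rcases Nat.eq_zero_or_pos k with hk0 | hkpos
    · subst hk0
      rw [pow_one, pow_one]
      rcases hcase with h | h
      · exact hlow q h
      · exact absurd rfl h
    · rw [pow_succ', pow_succ', MvPowerSeries.coeff_mul, MvPowerSeries.coeff_mul]
      apply Finset.sum_congr rfl
      intro p hp
      rw [Finset.HasAntidiagonal.mem_antidiagonal] at hp
      have hdeg : p.1.degree + p.2.degree = q.degree := by rw [← degree_add, hp]
      by_cases hp1 : p.1 = 0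
      · rw [hp1, MvPowerSeries.coeff_zero_eq_constantCoeff_apply,
          MvPowerSeries.coeff_zero_eq_constantCoeff_apply, h₁0, h₂0, zero_mul, zero_mul]
      · by_cases hp2 : p.2 = 0
        · have e1 : MvPowerSeries.coeff p.2 (h₁ ^ k) = 0 := by
            rw [hp2, MvPowerSeries.coeff_zero_eq_constantCoeff_apply, map_pow, h₁0,
              zero_pow (by omega : k ≠ 0)]
          have e2 : MvPowerSeries.coeff p.2 (h₂ ^ k) = 0 := by
            rw [hp2, MvPowerSeries.coeff_zero_eq_constantCoeff_apply, map_pow, h₂0,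
              zero_pow (by omega : k ≠ 0)]
          rw [e1, e2, mul_zero, mul_zero]
        · have hd1 : 0 < p.1.degree := by
            rcases Nat.eq_zero_or_pos p.1.degree with h | h
            · exact absurd ((Finsupp.degree_eq_zero_iff p.1).mp h) hp1
            · exact h
          have hd2 : 0 < p.2.degree := by
            rcases Nat.eq_zero_or_pos p.2.degree with h | h
            · exact absurd ((Finsupp.degree_eq_zero_iff p.2).mp h) hp2
            · exact h
          rw [hlow p.1 (by omega), ihk p.2 (by omega) (Or.inl (by omega))]

end CLem

end StmtAux

theorem stmt0' {K : Type*} [Field K] [CharZero K] {d : ℕ} (u : MvPowerSeries (Fin 1) K)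
    (hu0 : MvPowerSeries.constantCoeff u = 0)
    (hl0 : MvPowerSeries.coeff (Finsupp.single 0 1) u ≠ 0)
    (hlr : ∀ n : ℕ, 0 < n → (MvPowerSeries.coeff (Finsupp.single 0 1) u) ^ n ≠ 1)
    (h₁ h₂ : MvPowerSeries (Fin d) K)
    (h₁0 : MvPowerSeries.constantCoeff h₁ = 0)
    (h₂0 : MvPowerSeries.constantCoeff h₂ = 0)
    (hc₁ : msubst h₁ (fun i => msubst u ![MvPowerSeries.X i]) = msubst u ![h₁])
    (hc₂ : msubst h₂ (fun i => msubst u ![MvPowerSeries.X i]) = msubst u ![h₂])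
    (hder : ∀ i : Fin d, MvPowerSeries.coeff (Finsupp.single i 1) h₁
      = MvPowerSeries.coeff (Finsupp.single i 1) h₂) :
    h₁ = h₂ := by
  classical
  apply MvPowerSeries.ext
  suffices H : ∀ n : ℕ, ∀ m : Fin d →₀ ℕ, m.degree = n →
      MvPowerSeries.coeff m h₁ = MvPowerSeries.coeff m h₂ by
    intro m
    exact H m.degree m rfl
  intro n
  induction n using Nat.strong_induction_on with
  | _ n ih =>
  intro m hm
  rcases n with _ | _ | n
  · -- degree 0
    have hm0 : m = 0 := (Finsupp.degree_eq_zero_iff m).mp hm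
    rw [hm0, MvPowerSeries.coeff_zero_eq_constantCoeff_apply,
      MvPowerSeries.coeff_zero_eq_constantCoeff_apply, h₁0, h₂0]
  · -- degree 1
    obtain ⟨i, rfl⟩ : ∃ i, m = Finsupp.single i 1 := by
      have hne : m ≠ 0 := by
        intro h
        rw [h, map_zero] at hm
        exact absurd hm (by omega)
      obtain ⟨i, hi⟩ := Finsupp.support_nonempty_iff.mpr hne
      have h1 : 1 ≤ m i := Nat.one_le_iff_ne_zero.mpr (Finsupp.mem_support_iff.mp hi)
      have h2 : m i ≤ 1 := by
        have := Finsupp.le_degree i m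
        omega
      have hsub : m.support ⊆ {i} := by
        intro j hj
        rw [Finset.mem_singleton]
        by_contra hji
        have hj1 : 1 ≤ m j := Nat.one_le_iff_ne_zero.mpr (Finsupp.mem_support_iff.mp hj)
        have hpair : ({i, j} : Finset (Fin d)) ⊆ m.support := by
          intro x hx
          rcases Finset.mem_insert.mp hx with h | h
          · exact h ▸ hi
          · exact (Finset.mem_singleton.mp h) ▸ hj
        have hle : m i + m j ≤ m.degree := by
          rw [Finsupp.degree, ← Finset.sum_pair (Ne.symm hji)]
          exact Finset.sum_le_sum_of_subset hpair
        omega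
      refine ⟨i, ?_⟩
      rw [Finsupp.support_subset_singleton.mp hsub]
      congr 1
      omega
    exact hder i
  · -- degree n + 2
    have ihlow : ∀ q : Fin d →₀ ℕ, q.degree < n + 2 →
        MvPowerSeries.coeff q h₁ = MvPowerSeries.coeff q h₂ :=
      fun q hq => ih q.degree hq q rfl
    have hE : m ∈ Finset.Iic (Finsupp.equivFunOnFinite.symm (fun _ : Fin d => m.degree)) := by
      rw [StmtAux.mem_E]
      exact fun i => Finsupp.le_degree i m
    have key1 : MvPowerSeries.coeff m (msubst h₁ (fun i => msubst u ![MvPowerSeries.X i]))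
        - MvPowerSeries.coeff m (msubst h₂ (fun i => msubst u ![MvPowerSeries.X i]))
        = (MvPowerSeries.coeff m h₁ - MvPowerSeries.coeff m h₂) *
            (MvPowerSeries.coeff (Finsupp.single 0 1) u) ^ (n + 2) := by
      rw [StmtAux.coeff_msubst, StmtAux.coeff_msubst, ← Finset.sum_sub_distrib]
      rw [Finset.sum_congr rfl (fun e _ => (sub_mul _ _ _).symm)]
      rw [Finset.sum_eq_single_of_mem m hE]
      · rw [StmtAux.C_eq_self u hu0 m, hm]
      · intro e _ hne
        rcases Nat.lt_or_ge e.degree (n + 2) with hlt | hge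
        · rw [ihlow e hlt, sub_self, zero_mul]
        · obtain ⟨i, hi⟩ := StmtAux.exists_lt e m (by omega) hne
          rw [StmtAux.C_eq_zero u hu0 m e i hi, mul_zero]
    have hE1 : Finsupp.single (0 : Fin 1) 1 ∈ Finset.Iic
        (Finsupp.equivFunOnFinite.symm (fun _ : Fin 1 => m.degree)) := by
      rw [StmtAux.mem_E]
      intro j
      rw [Subsingleton.elim j 0, Finsupp.single_eq_same, hm]
      omega
    have key2 : MvPowerSeries.coeff m (msubst u ![h₁])
        - MvPowerSeries.coeff m (msubst u ![h₂])
        = (MvPowerSeries.coeff m h₁ - MvPowerSeries.coeff m h₂) *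
            MvPowerSeries.coeff (Finsupp.single 0 1) u := by
      rw [StmtAux.coeff_msubst, StmtAux.coeff_msubst, ← Finset.sum_sub_distrib]
      have hprod : ∀ (h : MvPowerSeries (Fin d) K) (e : Fin 1 →₀ ℕ),
          (∏ i, (![h] i) ^ e i) = h ^ e 0 := by
        intro h e
        rw [Fin.prod_univ_one]
        simp
      rw [Finset.sum_congr rfl (fun e _ => by rw [hprod, hprod, ← mul_sub])]
      rw [Finset.sum_eq_single_of_mem _ hE1]
      · simp only [Finsupp.single_eq_same, pow_one]
        ring
      · intro e _ hne
        have he0 : e 0 ≠ 1 := fun h => hne (by rw [StmtAux.fin1_eq e, h])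
        rw [StmtAux.pow_coeff_eq h₁ h₂ (n + 2) h₁0 h₂0 ihlow (e 0) m (le_of_eq hm)
          (Or.inr he0), sub_self, mul_zero]
    have hcoeff1 := congrArg (MvPowerSeries.coeff m) hc₁
    have hcoeff2 := congrArg (MvPowerSeries.coeff m) hc₂
    have heq : (MvPowerSeries.coeff m h₁ - MvPowerSeries.coeff m h₂) *
        (MvPowerSeries.coeff (Finsupp.single 0 1) u) ^ (n + 2)
        = (MvPowerSeries.coeff m h₁ - MvPowerSeries.coeff m h₂) *
            MvPowerSeries.coeff (Finsupp.single 0 1) u := by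
      rw [← key1, ← key2, hcoeff1, hcoeff2]
    set lam := MvPowerSeries.coeff (Finsupp.single 0 1) u with hlamdef
    have hfac : (MvPowerSeries.coeff m h₁ - MvPowerSeries.coeff m h₂) *
        (lam * (lam ^ (n + 1) - 1)) = 0 := by
      have : (MvPowerSeries.coeff m h₁ - MvPowerSeries.coeff m h₂) *
          (lam * (lam ^ (n + 1) - 1)) =
          (MvPowerSeries.coeff m h₁ - MvPowerSeries.coeff m h₂) * lam ^ (n + 2)
          - (MvPowerSeries.coeff m h₁ - MvPowerSeries.coeff m h₂) * lam := by ring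
      rw [this, heq, sub_self]
    have hne2 : lam * (lam ^ (n + 1) - 1) ≠ 0 :=
      mul_ne_zero hl0 (sub_ne_zero.mpr (hlr (n + 1) (by omega)))
    have := (mul_eq_zero.mp hfac).resolve_right hne2
    exact sub_eq_zero.mp this


/-- Rigidity: a multivariate power series vanishing at `0` and commuting with a
stable one-variable power series `u` is determined by its linear coefficients. -/
theorem stmt0 {K : Type*} [Field K] [CharZero K] {d : ℕ} (u : PS K) (hu : Stable u)
    (h₁ h₂ : MvPowerSeries (Fin d) K)
    (h₁0 : constantCoeff h₁ = 0) (h₂0 : constantCoeff h₂ = 0)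
    (hc₁ : compEach h₁ u = substIn u h₁) (hc₂ : compEach h₂ u = substIn u h₂)
    (hder : ∀ i : Fin d, pd0 h₁ i = pd0 h₂ i) :
    h₁ = h₂ := by
  obtain ⟨hu0, hl0, hlr⟩ := hu
  exact stmt0' u hu0 hl0 hlr h₁ h₂ h₁0 h₂0 hc₁ hc₂ hder
end

section
/- Let u(X) ∈ X·K⟦X⟧ be a power series over a field K of characteristic zero with u'(0) neither 0 nor a root of unity. If h(X) ∈ X·K⟦X⟧ satisfies h ∘ u = u ∘ h and h'(0) = 0, then h = 0. -/
open MvPowerSeries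

lemma fin1_eq_single (e : Fin 1 →₀ ℕ) : e = Finsupp.single 0 (e 0) := by
  apply Finsupp.ext
  intro i
  have : i = 0 := Subsingleton.elim i 0
  subst this
  simp

lemma comp_coeff {K : Type*} [Field K] (f g : PS K) (n : ℕ) :
    MvPowerSeries.coeff (Finsupp.single 0 n) (comp f g) =
      ∑ j ∈ Finset.range (n+1),
        MvPowerSeries.coeff (Finsupp.single 0 j) f *
          MvPowerSeries.coeff (Finsupp.single 0 n) (g ^ j) := by
  have hc : MvPowerSeries.coeff (Finsupp.single 0 n) (comp f g) =
      ∑ e ∈ Finset.Iic (Finsupp.equivFunOnFinite.symm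
        (fun _ : Fin 1 => (Finsupp.single (0 : Fin 1) n).sum fun _ k => k)),
      (MvPowerSeries.coeff e f) *
        MvPowerSeries.coeff (Finsupp.single 0 n) (∏ i, ![g] i ^ e i) := rfl
  rw [hc]
  have hsum : (Finsupp.single (0 : Fin 1) n).sum (fun _ k => k) = n := by simp
  rw [hsum]
  refine Finset.sum_nbij' (fun e => e 0) (fun j => Finsupp.single 0 j) ?_ ?_ ?_ ?_ ?_
  · intro e he
    simp only [Finset.mem_Iic] at he
    have := he 0
    simp at this
    simpa [Finset.mem_range, Nat.lt_succ_iff] using this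
  · intro j hj
    simp only [Finset.mem_range, Nat.lt_succ_iff] at hj
    simp only [Finset.mem_Iic]
    intro i
    have : i = 0 := Subsingleton.elim i 0
    subst this
    simpa using hj
  · intro e _; exact (fin1_eq_single e).symm
  · intro j _; simp
  · intro e _
    congr 1
    · exact congrArg _ (fin1_eq_single e)
    · congr 1
      rw [Fin.prod_univ_one]
      simp

lemma pow_coeff_diag {K : Type*} [Field K] (u : PS K) (hu0 : constantCoeff u = 0)
    (n : ℕ) :
    MvPowerSeries.coeff (Finsupp.single 0 n) (u ^ n) =
      (MvPowerSeries.coeff (Finsupp.single 0 1) u) ^ n := by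
  classical
  set a := MvPowerSeries.coeff (Finsupp.single (0:Fin 1) 1) u with ha
  rw [MvPowerSeries.coeff_pow]
  set l₀ : ℕ →₀ (Fin 1 →₀ ℕ) :=
    ∑ i ∈ Finset.range n, Finsupp.single i (Finsupp.single 0 1) with hl₀
  have hl₀app : ∀ j : ℕ, l₀ j = if j ∈ Finset.range n then Finsupp.single 0 1 else 0 := by
    intro j
    rw [hl₀, Finset.sum_apply']
    simp [Finsupp.single_apply]
  have hmem : l₀ ∈ Finset.finsuppAntidiag (Finset.range n) (Finsupp.single (0:Fin 1) n) := by
    rw [Finset.mem_finsuppAntidiag]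
    constructor
    · rw [Finset.sum_congr rfl (fun i hi => by rw [hl₀app i, if_pos hi])]
      rw [Finset.sum_const, Finset.card_range, Finsupp.smul_single, smul_eq_mul, mul_one]
    · intro j hj
      rw [Finsupp.mem_support_iff] at hj
      by_contra hjr
      rw [hl₀app j, if_neg hjr] at hj
      exact hj rfl
  rw [Finset.sum_eq_single_of_mem l₀ hmem]
  · rw [Finset.prod_congr rfl (fun i hi => by rw [hl₀app i, if_pos hi])]
    rw [Finset.prod_const, Finset.card_range]
  · intro l hl hne
    by_contra hprod
    rw [Finset.mem_finsuppAntidiag] at hl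
    have hone : ∀ i ∈ Finset.range n, (l i) 0 = 1 := by
      have hge : ∀ i ∈ Finset.range n, 1 ≤ (l i) 0 := by
        intro i hi
        by_contra hlt
        push_neg at hlt
        interval_cases h : (l i) 0
        have : l i = 0 := by
          rw [fin1_eq_single (l i), h, Finsupp.single_zero]
        apply hprod
        apply Finset.prod_eq_zero hi
        rw [this]
        exact hu0
      have hsum : ∑ i ∈ Finset.range n, (l i) 0 = n := by
        have := DFunLike.congr_fun hl.1 (0 : Fin 1)
        rw [Finset.sum_apply'] at this
        simpa using this
      intro i hi
      refine le_antisymm ?_ (hge i hi)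
      by_contra hgt
      push_neg at hgt
      have h2 : 2 ≤ (l i) 0 := hgt
      have : n + 1 ≤ ∑ j ∈ Finset.range n, (l j) 0 := by
        calc n + 1 = ((Finset.range n).erase i).card * 1 + 2 := by
              rw [Finset.card_erase_of_mem hi, Finset.card_range, mul_one]
              have := Finset.mem_range.mp hi
              omega
          _ ≤ (∑ j ∈ (Finset.range n).erase i, (l j) 0) + (l i) 0 := by
              gcongr
              · calc ((Finset.range n).erase i).card * 1 =
                    ((Finset.range n).erase i).card • 1 := by simp
                  _ ≤ _ := Finset.card_nsmul_le_sum _ _ _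
                      (fun j hj => hge j (Finset.mem_of_mem_erase hj))
          _ = ∑ j ∈ Finset.range n, (l j) 0 := by
              rw [add_comm]; exact Finset.add_sum_erase (Finset.range n) (fun j => (l j) 0) hi
      omega
    apply hne
    apply Finsupp.ext
    intro j
    rw [hl₀app j]
    by_cases hj : j ∈ Finset.range n
    · rw [if_pos hj, fin1_eq_single (l j), hone j hj]
    · rw [if_neg hj]
      by_contra hne'
      exact hj (hl.2 (Finsupp.mem_support_iff.mpr hne'))

lemma pow_coeff_zero {K : Type*} [Field K] (h : PS K) (n j : ℕ) (hn : 1 ≤ n) (hj : 2 ≤ j)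
    (hlow : ∀ d : ℕ, d < n → MvPowerSeries.coeff (Finsupp.single 0 d) h = 0) :
    MvPowerSeries.coeff (Finsupp.single 0 n) (h ^ j) = 0 := by
  classical
  rw [MvPowerSeries.coeff_pow]
  apply Finset.sum_eq_zero
  intro l hl
  by_contra hprod
  rw [Finset.mem_finsuppAntidiag] at hl
  have hge : ∀ i ∈ Finset.range j, n ≤ (l i) 0 := by
    intro i hi
    by_contra hlt
    push_neg at hlt
    apply hprod
    apply Finset.prod_eq_zero hi
    rw [fin1_eq_single (l i)]
    exact hlow _ hlt
  have hsum : ∑ i ∈ Finset.range j, (l i) 0 = n := by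
    have := DFunLike.congr_fun hl.1 (0 : Fin 1)
    rw [Finset.sum_apply'] at this
    simpa using this
  have : j * n ≤ n := by
    calc j * n = (Finset.range j).card • n := by rw [Finset.card_range]; simp
      _ ≤ ∑ i ∈ Finset.range j, (l i) 0 := Finset.card_nsmul_le_sum _ _ _ hge
      _ = n := hsum
  nlinarith

/-- One-variable rigidity: a power series `h ∈ X·K⟦X⟧` commuting with a stable
series `u` and with `h'(0) = 0` is zero. -/
theorem stmt1 {K : Type*} [Field K] [CharZero K] (u : PS K) (hu : Stable u)
    (h : PS K) (h0 : constantCoeff h = 0)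
    (hcomm : comp h u = comp u h) (hder : d0 h = 0) :
    h = 0 := by
  obtain ⟨hu0, ha0, haroot⟩ := hu
  have H : ∀ n : ℕ, MvPowerSeries.coeff (Finsupp.single 0 n) h = 0 := by
    intro n
    induction n using Nat.strong_induction_on with
    | _ n ih =>
      match n, ih with
      | 0, _ => simpa using h0
      | 1, _ => exact hder
      | (m+2), ih =>
        set n := m + 2 with hn
        have hkey := congrArg (MvPowerSeries.coeff (Finsupp.single 0 n)) hcomm
        rw [comp_coeff, comp_coeff] at hkey
        have hL : ∑ j ∈ Finset.range (n+1),
            MvPowerSeries.coeff (Finsupp.single 0 j) h *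
              MvPowerSeries.coeff (Finsupp.single 0 n) (u ^ j) =
            MvPowerSeries.coeff (Finsupp.single 0 n) h * (d0 u) ^ n := by
          rw [Finset.sum_eq_single_of_mem n (Finset.self_mem_range_succ n)]
          · rw [pow_coeff_diag u hu0]; rfl
          · intro j hj hjn
            have := Finset.mem_range.mp hj
            rw [ih j (by omega), zero_mul]
        have hR : ∑ j ∈ Finset.range (n+1),
            MvPowerSeries.coeff (Finsupp.single 0 j) u *
              MvPowerSeries.coeff (Finsupp.single 0 n) (h ^ j) =
            (d0 u) * MvPowerSeries.coeff (Finsupp.single 0 n) h := by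
          rw [Finset.sum_eq_single_of_mem 1 (by simp [hn])]
          · rw [pow_one]; rfl
          · intro j hj hj1
            rcases Nat.lt_or_ge j 2 with hj2 | hj2
            · interval_cases j
              · rw [pow_zero]
                have : MvPowerSeries.coeff (Finsupp.single (0:Fin 1) n) (1 : PS K) = 0 := by
                  rw [MvPowerSeries.coeff_one, if_neg]
                  simp [hn, Finsupp.single_eq_zero]
                rw [this, mul_zero]
              · omega
            · rw [pow_coeff_zero h n j (by omega) hj2 (fun d hd => ih d hd), mul_zero]
        rw [hL, hR] at hkey
        by_contra hne
        have hfac : (d0 u) ^ n = d0 u :=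
          mul_left_cancel₀ hne (by rw [hkey, mul_comm])
        have hpow : (d0 u) ^ (m+1) * d0 u = 1 * d0 u := by
          rw [one_mul, ← pow_succ]
          have hmn : m + 1 + 1 = n := by omega
          rw [hmn, hfac]
        exact haroot (m+1) (by omega) (mul_right_cancel₀ ha0 hpow)
  apply MvPowerSeries.ext
  intro m
  rw [fin1_eq_single m, H, map_zero]
end

section
/- Let u(X) ∈ X·K⟦X⟧ with u'(0) neither 0 nor a root of unity, and suppose h⁽¹⁾, h⁽²⁾ ∈ K⟦X₁,...,X_d⟧ both vanish at 0, commute with u, and agree in all total degrees ≤ m for some m ≥ 1. Then the degree-(m+1) homogeneous parts of h⁽¹⁾ and h⁽²⁾ are both congruent to (h_m ∘ u − u ∘ h_m)/(u'(0) − u'(0)^{m+1}) modulo degree m+2, where h_m is the common truncation of h⁽ⁱ⁾ in degrees ≤ m; in particular they agree in degrees ≤ m+1. -/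
open MvPowerSeries

/-- The truncation of a multivariate power series in total degrees `≤ m`. -/
noncomputable def truncLE {R : Type*} [CommRing R] {d : ℕ} (m : ℕ)
    (h : MvPowerSeries (Fin d) R) : MvPowerSeries (Fin d) R :=
  fun e => if (e.sum fun _ n => n) ≤ m then MvPowerSeries.coeff e h else 0

namespace RigidAux

variable {R : Type*} [CommRing R] {d : ℕ}

def deg {d : ℕ} (e : Fin d →₀ ℕ) : ℕ := e.sum fun _ n => n

lemma deg_eq_sum (e : Fin d →₀ ℕ) : deg e = ∑ i, e i :=
  Finsupp.sum_fintype _ _ (fun _ => rfl)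

lemma apply_le_deg (e : Fin d →₀ ℕ) (i : Fin d) : e i ≤ deg e := by
  rw [deg_eq_sum]
  exact Finset.single_le_sum (fun _ _ => Nat.zero_le _) (Finset.mem_univ i)

lemma deg_add (a b : Fin d →₀ ℕ) : deg (a + b) = deg a + deg b := by
  simp [deg_eq_sum, Finset.sum_add_distrib]

lemma deg_single (i : Fin d) (k : ℕ) : deg (Finsupp.single i k) = k :=
  Finsupp.sum_single_index rfl

lemma deg_eq_zero {e : Fin d →₀ ℕ} (h : deg e = 0) : e = 0 := by
  rw [deg_eq_sum] at h
  ext i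
  exact Finset.sum_eq_zero_iff.mp h i (Finset.mem_univ i)

lemma fin1_eq (e : Fin 1 →₀ ℕ) : e = Finsupp.single 0 (e 0) := by
  refine Finsupp.ext fun j => ?_
  have hj : j = 0 := Subsingleton.elim _ _
  subst hj; simp

lemma coeff_msubst {k : ℕ} (f : MvPowerSeries (Fin k) R) (g : Fin k → MvPowerSeries (Fin d) R)
    (m : Fin d →₀ ℕ) :
    MvPowerSeries.coeff m (msubst f g) = ∑ e ∈ Finset.Iic (Finsupp.equivFunOnFinite.symm
      (fun _ : Fin k => deg m)), (MvPowerSeries.coeff e f) *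
        MvPowerSeries.coeff m (∏ i, g i ^ e i) := by
  rw [MvPowerSeries.coeff_apply]
  rfl

lemma mem_Iic_const {k n : ℕ} (e : Fin k →₀ ℕ) :
    e ∈ Finset.Iic (Finsupp.equivFunOnFinite.symm (fun _ : Fin k => n)) ↔ ∀ i, e i ≤ n := by
  simp [Finsupp.le_def]

/-- `Lead a α t` : all coefficients of `a` in total degree `≤ deg α` vanish except
possibly the one at `α`, which is `t`. -/
def Lead (a : MvPowerSeries (Fin d) R) (α : Fin d →₀ ℕ) (t : R) : Prop :=
  ∀ e : Fin d →₀ ℕ, deg e ≤ deg α → MvPowerSeries.coeff e a = if e = α then t else 0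

lemma Lead.one : Lead (1 : MvPowerSeries (Fin d) R) 0 1 := by
  intro e _
  classical
  exact MvPowerSeries.coeff_one _

lemma Lead.mul {a b : MvPowerSeries (Fin d) R} {α β : Fin d →₀ ℕ} {s t : R}
    (ha : Lead a α s) (hb : Lead b β t) : Lead (a * b) (α + β) (s * t) := by
  classical
  intro e he
  rw [deg_add] at he
  rw [MvPowerSeries.coeff_mul]
  have hterm : ∀ p ∈ Finset.HasAntidiagonal.antidiagonal e,
      MvPowerSeries.coeff p.1 a * MvPowerSeries.coeff p.2 b
        = if p = (α, β) then s * t else 0 := by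
    rintro ⟨x, y⟩ hp
    rw [Finset.HasAntidiagonal.mem_antidiagonal] at hp
    have hdeg : deg x + deg y = deg e := by rw [← hp, deg_add]
    by_cases hx : deg x ≤ deg α
    · rw [ha x hx]
      by_cases hxa : x = α
      · subst hxa
        have hy : deg y ≤ deg β := by omega
        rw [hb y hy]
        simp [Prod.ext_iff]
      · simp [hxa, Prod.ext_iff]
    · have hy : deg y < deg β := by omega
      rw [hb y (le_of_lt hy)]
      have hyb : y ≠ β := fun h => by subst h; omega
      simp [hyb, Prod.ext_iff]
  rw [Finset.sum_congr rfl hterm, Finset.sum_ite_eq' (Finset.HasAntidiagonal.antidiagonal e) (α, β)]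
  simp only [Finset.HasAntidiagonal.mem_antidiagonal]
  by_cases h : e = α + β
  · simp [h]
  · have : ¬ (α + β = e) := fun hh => h hh.symm
    simp [h, this]

lemma Lead.prod {ι : Type*} (s : Finset ι) (f : ι → MvPowerSeries (Fin d) R)
    (α : ι → (Fin d →₀ ℕ)) (t : ι → R) (h : ∀ i ∈ s, Lead (f i) (α i) (t i)) :
    Lead (∏ i ∈ s, f i) (∑ i ∈ s, α i) (∏ i ∈ s, t i) := by
  classical
  induction s using Finset.induction_on with
  | empty => simpa using Lead.one
  | @insert x s' hx ih =>
    rw [Finset.prod_insert hx, Finset.sum_insert hx, Finset.prod_insert hx]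
    exact (h x (Finset.mem_insert_self _ _)).mul
      (ih fun i hi => h i (Finset.mem_insert_of_mem hi))

lemma univ_sum_single (g : Fin d →₀ ℕ) : ∑ i, Finsupp.single i (g i) = g := by
  refine Finsupp.ext fun j => ?_
  rw [Finset.sum_apply']
  simp [Finsupp.single_apply]

lemma prod_fin_one (f : MvPowerSeries (Fin d) R) (e : Fin 1 →₀ ℕ) :
    (∏ j, (![f] j) ^ e j) = f ^ e 0 := by
  rw [Fin.prod_univ_one]
  simp

lemma coeff_v (u : PS R) (i : Fin d) (m : Fin d →₀ ℕ) :
    MvPowerSeries.coeff m (msubst u ![MvPowerSeries.X i])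
      = if m = Finsupp.single i (m i) then
          MvPowerSeries.coeff (Finsupp.single 0 (m i)) u else 0 := by
  classical
  rw [coeff_msubst]
  have hterm : ∀ e : Fin 1 →₀ ℕ,
      MvPowerSeries.coeff e u * MvPowerSeries.coeff m (∏ j, (![(X i : MvPowerSeries (Fin d) R)] j) ^ e j)
        = if m = Finsupp.single i (e 0) then MvPowerSeries.coeff e u else 0 := by
    intro e
    rw [prod_fin_one, MvPowerSeries.coeff_X_pow]
    by_cases h : m = Finsupp.single i (e 0) <;> simp [h]
  by_cases hm : m = Finsupp.single i (m i)
  · rw [if_pos hm]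
    rw [Finset.sum_congr rfl fun e _ => hterm e]
    have hterm2 : ∀ e : Fin 1 →₀ ℕ,
        (if m = Finsupp.single i (e 0) then MvPowerSeries.coeff e u else 0)
          = if e = Finsupp.single 0 (m i) then
              MvPowerSeries.coeff (Finsupp.single 0 (m i)) u else 0 := by
      intro e
      by_cases he : e = Finsupp.single 0 (m i)
      · have he0 : e 0 = m i := by rw [he]; simp
        rw [he0, if_pos hm, if_pos he, he]
      · have he0 : e 0 ≠ m i := by
          intro hh
          exact he (by rw [fin1_eq e, hh])
        have : m ≠ Finsupp.single i (e 0) := by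
          intro hh
          apply he0
          have := congrArg (fun f => f i) hh
          simpa using this.symm
        rw [if_neg this, if_neg he]
    rw [Finset.sum_congr rfl fun e _ => hterm2 e,
      Finset.sum_ite_eq' _ (Finsupp.single 0 (m i))]
    rw [if_pos]
    rw [mem_Iic_const]
    intro j
    have hj : j = (0 : Fin 1) := Subsingleton.elim _ _
    subst hj
    simpa using apply_le_deg m i
  · rw [if_neg hm]
    refine Finset.sum_eq_zero fun e _ => ?_
    rw [hterm e, if_neg]
    intro hh
    apply hm
    have h2 : m i = e 0 := by
      have := congrArg (fun f => f i) hh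
      simpa using this
    rw [h2]
    exact hh

lemma lead_v (u : PS R) (hu0 : constantCoeff u = 0) (i : Fin d) :
    Lead (msubst u ![MvPowerSeries.X i]) (Finsupp.single i 1)
      (MvPowerSeries.coeff (Finsupp.single 0 1) u) := by
  intro e he
  rw [deg_single] at he
  rw [coeff_v]
  by_cases h1 : e = Finsupp.single i 1
  · have hei : e i = 1 := by rw [h1]; simp
    rw [hei, if_pos h1]
  · rw [if_neg h1]
    by_cases h2 : e = Finsupp.single i (e i)
    · rw [if_pos h2]
      have hei : e i ≤ 1 := le_trans (apply_le_deg e i) he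
      have hei0 : e i = 0 := by
        rcases Nat.lt_or_ge (e i) 1 with h | h
        · omega
        · exfalso; apply h1; rw [h2]; congr 1; omega
      rw [hei0]
      simpa using hu0
    · rw [if_neg h2]

lemma lead_v_pow (u : PS R) (hu0 : constantCoeff u = 0) (i : Fin d) (k : ℕ) :
    Lead ((msubst u ![MvPowerSeries.X i]) ^ k) (Finsupp.single i k)
      ((MvPowerSeries.coeff (Finsupp.single 0 1) u) ^ k) := by
  induction k with
  | zero => simpa using Lead.one
  | succ n ih =>
    have := ih.mul (lead_v u hu0 i)
    rw [← Finsupp.single_add] at this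
    rw [pow_succ, pow_succ]
    exact this

lemma lead_prod_v (u : PS R) (hu0 : constantCoeff u = 0) (g : Fin d →₀ ℕ) :
    Lead (∏ i, (msubst u ![MvPowerSeries.X i]) ^ g i) g
      ((MvPowerSeries.coeff (Finsupp.single 0 1) u) ^ deg g) := by
  have h := Lead.prod Finset.univ (fun i => (msubst u ![MvPowerSeries.X i]) ^ g i)
    (fun i => Finsupp.single i (g i))
    (fun i => (MvPowerSeries.coeff (Finsupp.single 0 1) u) ^ g i)
    (fun i _ => lead_v_pow u hu0 i (g i))
  rw [univ_sum_single, Finset.prod_pow_eq_pow_sum, ← deg_eq_sum] at h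
  exact h

/-- order at least `n`. -/
def OrdGE (n : ℕ) (a : MvPowerSeries (Fin d) R) : Prop :=
  ∀ e : Fin d →₀ ℕ, deg e < n → MvPowerSeries.coeff e a = 0

lemma OrdGE.mul {p q : ℕ} {a b : MvPowerSeries (Fin d) R} (ha : OrdGE p a) (hb : OrdGE q b) :
    OrdGE (p + q) (a * b) := by
  classical
  intro e he
  rw [MvPowerSeries.coeff_mul]
  refine Finset.sum_eq_zero fun x hx => ?_
  rw [Finset.HasAntidiagonal.mem_antidiagonal] at hx
  have hd : deg x.1 + deg x.2 = deg e := by rw [← hx, deg_add]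
  rcases Nat.lt_or_ge (deg x.1) p with h | h
  · rw [ha x.1 h, zero_mul]
  · rw [hb x.2 (by omega), mul_zero]

lemma OrdGE.pow {a : MvPowerSeries (Fin d) R} (ha : OrdGE 1 a) (k : ℕ) : OrdGE k (a ^ k) := by
  induction k with
  | zero => intro e he; omega
  | succ n ih =>
    rw [pow_succ]
    exact ih.mul ha

lemma ordGE_one_of_const {a : MvPowerSeries (Fin d) R} (ha : constantCoeff a = 0) :
    OrdGE 1 a := by
  intro e he
  have : e = 0 := deg_eq_zero (by omega)
  rw [this]
  simpa using ha

lemma coeff_pow_eq {f f' : MvPowerSeries (Fin d) R}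
    (hf : constantCoeff f = 0) (hf' : constantCoeff f' = 0) {n : ℕ}
    (hagree : ∀ g, deg g < n → MvPowerSeries.coeff g f = MvPowerSeries.coeff g f')
    {j : ℕ} (hj : 2 ≤ j) {e : Fin d →₀ ℕ} (he : deg e ≤ n) :
    MvPowerSeries.coeff e (f ^ j) = MvPowerSeries.coeff e (f' ^ j) := by
  have hsub : MvPowerSeries.coeff e (f ^ j - f' ^ j) = 0 := by
    rw [← geom_sum₂_mul f f' j]
    have hq : OrdGE (j - 1) (∑ i ∈ Finset.range j, f ^ i * f' ^ (j - 1 - i)) := by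
      intro e' he'
      rw [map_sum]
      refine Finset.sum_eq_zero fun i hi => ?_
      rw [Finset.mem_range] at hi
      have h3 : OrdGE (i + (j - 1 - i)) (f ^ i * f' ^ (j - 1 - i)) :=
        ((ordGE_one_of_const hf).pow i).mul ((ordGE_one_of_const hf').pow _)
      apply h3
      omega
    have hd : OrdGE n (f - f') := fun g hg => by rw [map_sub, hagree g hg, sub_self]
    apply hq.mul hd
    omega
  rw [map_sub, sub_eq_zero] at hsub
  exact hsub

lemma ce_diff (u : PS R) (hu0 : constantCoeff u = 0)
    (f f' : MvPowerSeries (Fin d) R) (e : Fin d →₀ ℕ)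
    (hagree : ∀ g, deg g < deg e →
      MvPowerSeries.coeff g f = MvPowerSeries.coeff g f') :
    MvPowerSeries.coeff e (compEach f u) - MvPowerSeries.coeff e (compEach f' u)
      = (MvPowerSeries.coeff (Finsupp.single 0 1) u) ^ (deg e) *
          (MvPowerSeries.coeff e f - MvPowerSeries.coeff e f') := by
  classical
  rw [compEach, compEach, coeff_msubst, coeff_msubst, ← Finset.sum_sub_distrib]
  have hre : ∀ g : Fin d →₀ ℕ,
      MvPowerSeries.coeff g f *
          MvPowerSeries.coeff e (∏ i, (msubst u ![MvPowerSeries.X i]) ^ g i)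
        - MvPowerSeries.coeff g f' *
          MvPowerSeries.coeff e (∏ i, (msubst u ![MvPowerSeries.X i]) ^ g i)
      = (MvPowerSeries.coeff g f - MvPowerSeries.coeff g f') *
          MvPowerSeries.coeff e (∏ i, (msubst u ![MvPowerSeries.X i]) ^ g i) :=
    fun g => (sub_mul _ _ _).symm
  rw [Finset.sum_congr rfl fun g _ => hre g]
  rw [Finset.sum_eq_single_of_mem e
    (by rw [mem_Iic_const]; exact fun i => apply_le_deg e i) ?_]
  · rw [(lead_prod_v u hu0 e) e le_rfl, if_pos rfl, mul_comm]
  · intro g _ hge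
    rcases Nat.lt_or_ge (deg g) (deg e) with h | h
    · rw [hagree g h, sub_self, zero_mul]
    · rw [(lead_prod_v u hu0 g) e h, if_neg (by exact fun hh => hge hh.symm), mul_zero]

lemma si_diff (u : PS R) (f f' : MvPowerSeries (Fin d) R)
    (hf : constantCoeff f = 0) (hf' : constantCoeff f' = 0) (e : Fin d →₀ ℕ)
    (hagree : ∀ g, deg g < deg e →
      MvPowerSeries.coeff g f = MvPowerSeries.coeff g f') :
    MvPowerSeries.coeff e (substIn u f) - MvPowerSeries.coeff e (substIn u f')
      = (MvPowerSeries.coeff (Finsupp.single 0 1) u) *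
          (MvPowerSeries.coeff e f - MvPowerSeries.coeff e f') := by
  classical
  rw [substIn, substIn, coeff_msubst, coeff_msubst, ← Finset.sum_sub_distrib]
  have hre : ∀ ε : Fin 1 →₀ ℕ,
      MvPowerSeries.coeff ε u * MvPowerSeries.coeff e (∏ j, (![f] j) ^ ε j)
        - MvPowerSeries.coeff ε u * MvPowerSeries.coeff e (∏ j, (![f'] j) ^ ε j)
      = MvPowerSeries.coeff ε u *
          (MvPowerSeries.coeff e (f ^ ε 0) - MvPowerSeries.coeff e (f' ^ ε 0)) := by
    intro ε
    rw [prod_fin_one, prod_fin_one, mul_sub]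
  rw [Finset.sum_congr rfl fun ε _ => hre ε]
  rw [Finset.sum_eq_single (Finsupp.single 0 1) ?_ ?_]
  · simp
  · intro ε _ hne
    have h0 : ε 0 ≠ 1 := fun h => hne (by rw [fin1_eq ε, h])
    rcases Nat.lt_or_ge (ε 0) 2 with h | h
    · have : ε 0 = 0 := by omega
      rw [this, pow_zero, pow_zero, sub_self, mul_zero]
    · rw [coeff_pow_eq hf hf' hagree h le_rfl, sub_self, mul_zero]
  · intro hnm
    have hd : deg e = 0 := by
      by_contra hcon
      apply hnm
      rw [mem_Iic_const]
      intro j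
      have hj : j = (0 : Fin 1) := Subsingleton.elim _ _
      subst hj
      simp only [Finsupp.single_eq_same]
      omega
    have he0 : e = 0 := deg_eq_zero hd
    subst he0
    have h1 : MvPowerSeries.coeff (0 : Fin d →₀ ℕ) f = 0 := by
      rw [MvPowerSeries.coeff_zero_eq_constantCoeff]; exact hf
    have h2 : MvPowerSeries.coeff (0 : Fin d →₀ ℕ) f' = 0 := by
      rw [MvPowerSeries.coeff_zero_eq_constantCoeff]; exact hf'
    simp [h1, h2]

lemma deg_zero : deg (0 : Fin d →₀ ℕ) = 0 := Finsupp.sum_zero_index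

end RigidAux

open RigidAux

/-- The inductive step in the rigidity theorem: if `h⁽¹⁾` and `h⁽²⁾` vanish at `0`,
commute with the stable series `u` and agree in total degrees `≤ m`, then in degrees
`≤ m+1` each `h⁽ⁱ⁾ − h_m` is given by `(h_m ∘ u − u ∘ h_m)/(u'(0) − u'(0)^{m+1})`,
where `h_m` is the common truncation in degrees `≤ m`; in particular `h⁽¹⁾` and
`h⁽²⁾` agree in degrees `≤ m+1`. -/
theorem stmt2 {K : Type*} [Field K] [CharZero K] {d : ℕ} (u : PS K) (hu : Stable u)
    (h₁ h₂ : MvPowerSeries (Fin d) K)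
    (h₁0 : constantCoeff h₁ = 0) (h₂0 : constantCoeff h₂ = 0)
    (hc₁ : compEach h₁ u = substIn u h₁) (hc₂ : compEach h₂ u = substIn u h₂)
    (m : ℕ) (hm : 1 ≤ m)
    (hagree : ∀ e : Fin d →₀ ℕ, (e.sum fun _ n => n) ≤ m →
      MvPowerSeries.coeff e h₁ = MvPowerSeries.coeff e h₂) :
    (∀ e : Fin d →₀ ℕ, (e.sum fun _ n => n) ≤ m + 1 →
        MvPowerSeries.coeff e (h₁ - truncLE m h₁)
          = (d0 u - (d0 u) ^ (m + 1))⁻¹ *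
            MvPowerSeries.coeff e (compEach (truncLE m h₁) u - substIn u (truncLE m h₁))) ∧
    (∀ e : Fin d →₀ ℕ, (e.sum fun _ n => n) ≤ m + 1 →
        MvPowerSeries.coeff e (h₂ - truncLE m h₁)
          = (d0 u - (d0 u) ^ (m + 1))⁻¹ *
            MvPowerSeries.coeff e (compEach (truncLE m h₁) u - substIn u (truncLE m h₁))) ∧
    (∀ e : Fin d →₀ ℕ, (e.sum fun _ n => n) ≤ m + 1 →
        MvPowerSeries.coeff e h₁ = MvPowerSeries.coeff e h₂) := by
  classical
  classical
  have hc1 : d0 u = MvPowerSeries.coeff (Finsupp.single 0 1) u := rfl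
  set c : K := d0 u with hcdef
  set hM : MvPowerSeries (Fin d) K := truncLE m h₁ with hMdef
  have coeff_hM : ∀ g : Fin d →₀ ℕ, MvPowerSeries.coeff g hM
      = if deg g ≤ m then MvPowerSeries.coeff g h₁ else 0 := by
    intro g
    rw [MvPowerSeries.coeff_apply]
    rfl
  have hM0 : constantCoeff hM = 0 := by
    rw [← MvPowerSeries.coeff_zero_eq_constantCoeff, coeff_hM, if_pos (by rw [deg_zero]; omega),
      MvPowerSeries.coeff_zero_eq_constantCoeff]
    exact h₁0
  have hcm : c - c ^ (m + 1) ≠ 0 := by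
    have h1 : c ≠ 0 := hu.2.1
    have h2 : c ^ m ≠ 1 := hu.2.2 m hm
    have h3 : c - c ^ (m + 1) = c * (1 - c ^ m) := by ring
    rw [h3]
    exact mul_ne_zero h1 (sub_ne_zero.mpr fun h => h2 h.symm)
  have key : ∀ h : MvPowerSeries (Fin d) K, constantCoeff h = 0 →
      compEach h u = substIn u h →
      (∀ g : Fin d →₀ ℕ, deg g ≤ m →
        MvPowerSeries.coeff g h = MvPowerSeries.coeff g h₁) →
      ∀ e : Fin d →₀ ℕ, deg e ≤ m + 1 →
        MvPowerSeries.coeff e (h - hM)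
          = (c - c ^ (m + 1))⁻¹ *
              MvPowerSeries.coeff e (compEach hM u - substIn u hM) := by
    intro h h0 hcomm hag e he
    have hagM : ∀ g : Fin d →₀ ℕ, deg g ≤ m →
        MvPowerSeries.coeff g h = MvPowerSeries.coeff g hM := by
      intro g hg
      rw [coeff_hM, if_pos hg]
      exact hag g hg
    have haglt : ∀ g : Fin d →₀ ℕ, deg g < deg e →
        MvPowerSeries.coeff g h = MvPowerSeries.coeff g hM := fun g hg =>
      hagM g (by omega)
    have hce := ce_diff u hu.1 h hM e haglt
    have hsi := si_diff u h hM h0 hM0 e haglt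
    have hcc : MvPowerSeries.coeff e (compEach h u)
        = MvPowerSeries.coeff e (substIn u h) := by rw [hcomm]
    have main : MvPowerSeries.coeff e (compEach hM u - substIn u hM)
        = (c - c ^ (deg e)) *
            (MvPowerSeries.coeff e h - MvPowerSeries.coeff e hM) := by
      rw [map_sub]
      have e1 : MvPowerSeries.coeff e (compEach hM u)
          = MvPowerSeries.coeff e (compEach h u)
            - c ^ (deg e) * (MvPowerSeries.coeff e h - MvPowerSeries.coeff e hM) := by
        rw [← hc1] at hce
        linear_combination -hce
      have e2 : MvPowerSeries.coeff e (substIn u hM)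
          = MvPowerSeries.coeff e (substIn u h)
            - c * (MvPowerSeries.coeff e h - MvPowerSeries.coeff e hM) := by
        rw [← hc1] at hsi
        linear_combination -hsi
      rw [e1, e2, hcc]
      ring
    have hL : MvPowerSeries.coeff e (h - hM)
        = MvPowerSeries.coeff e h - MvPowerSeries.coeff e hM := map_sub _ _ _
    rcases Nat.lt_or_ge (deg e) (m + 1) with hlt | hge
    · have hD : MvPowerSeries.coeff e h = MvPowerSeries.coeff e hM := hagM e (by omega)
      rw [hL, main, hD]
      ring
    · have hn : deg e = m + 1 := by omega
      rw [hL, main, hn, inv_mul_cancel_left₀ hcm]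
  refine ⟨?_, ?_, ?_⟩
  · intro e he
    exact key h₁ h₁0 hc₁ (fun g _ => rfl) e he
  · intro e he
    exact key h₂ h₂0 hc₂ (fun g hg => (hagree g hg).symm) e he
  · intro e he
    have k1 := key h₁ h₁0 hc₁ (fun g _ => rfl) e he
    have k2 := key h₂ h₂0 hc₂ (fun g hg => (hagree g hg).symm) e he
    have h12 : MvPowerSeries.coeff e (h₁ - hM) = MvPowerSeries.coeff e (h₂ - hM) :=
      k1.trans k2.symm
    rw [map_sub, map_sub] at h12
    linear_combination h12
end

section
/- Let F(X,Y) ∈ O_K⟦X,Y⟧ be a formal group law over the ring of integers O_K of a p-adic field K, and let u ∈ X·O_K⟦X⟧ be an endomorphism of F whose derivative u'(0) is neither 0 nor a root of unity. If h(X) ∈ X·O_K⟦X⟧ satisfies h ∘ u = u ∘ h, then h is an endomorphism of F, i.e. h(F(X,Y)) = F(h(X),h(Y)). -/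
open MvPowerSeries

/-- A formal group law over `R`: `F(X,0) = X`, `F(0,Y) = Y` and
`F(F(X,Y),Z) = F(X,F(Y,Z))`. -/
structure IsFGL {R : Type*} [CommRing R] (F : MvPowerSeries (Fin 2) R) : Prop where
  left : ∀ n : ℕ, MvPowerSeries.coeff (Finsupp.single 0 n) F = if n = 1 then 1 else 0
  right : ∀ n : ℕ, MvPowerSeries.coeff (Finsupp.single 1 n) F = if n = 1 then 1 else 0
  assoc : msubst F ![msubst F ![(X 0 : MvPowerSeries (Fin 3) R), X 1], X 2]
      = msubst F ![(X 0 : MvPowerSeries (Fin 3) R),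
          msubst F ![(X 1 : MvPowerSeries (Fin 3) R), X 2]]

/-- `h` is a homomorphism of formal group laws from `F` to `G`:
`h(0) = 0` and `h(F(X,Y)) = G(h(X),h(Y))`. -/
def IsHomFGL {R : Type*} [CommRing R] (F G : MvPowerSeries (Fin 2) R) (h : PS R) : Prop :=
  constantCoeff h = 0 ∧
    msubst h ![F] = msubst G ![msubst h ![(X 0 : MvPowerSeries (Fin 2) R)],
      msubst h ![(X 1 : MvPowerSeries (Fin 2) R)]]

/-- `h` is an endomorphism of the formal group law `F`. -/
def IsEndoFGL {R : Type*} [CommRing R] (F : MvPowerSeries (Fin 2) R) (h : PS R) : Prop :=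
  IsHomFGL F F h


section Aux
variable {R : Type*} [CommRing R]

/-- total degree -/
def deg {l : ℕ} (m : Fin l →₀ ℕ) : ℕ := m.sum fun _ n => n

lemma deg_add {l : ℕ} (p q : Fin l →₀ ℕ) : deg (p + q) = deg p + deg q :=
  Finsupp.sum_add_index' (fun _ => rfl) (fun _ _ _ => rfl)

lemma deg_eq_sum_univ {l : ℕ} (m : Fin l →₀ ℕ) : deg m = ∑ i, m i :=
  Finsupp.sum_fintype _ _ (fun _ => rfl)

lemma apply_le_deg {l : ℕ} (m : Fin l →₀ ℕ) (i : Fin l) : m i ≤ deg m := by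
  rw [deg_eq_sum_univ]
  exact Finset.single_le_sum (fun _ _ => Nat.zero_le _) (Finset.mem_univ i)

lemma deg_zero {l : ℕ} : deg (0 : Fin l →₀ ℕ) = 0 := Finsupp.sum_zero_index

lemma deg_eq_zero {l : ℕ} {m : Fin l →₀ ℕ} (h : deg m = 0) : m = 0 := by
  ext i
  simpa using Nat.le_zero.mp (h ▸ apply_le_deg m i)

lemma deg_single {l : ℕ} (i : Fin l) (n : ℕ) : deg (Finsupp.single i n) = n :=
  Finsupp.sum_single_index rfl

lemma ne_zero_of_deg {l : ℕ} {m : Fin l →₀ ℕ} (h : 0 < deg m) : m ≠ 0 := by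
  rintro rfl; simp [deg_zero] at h

/-- constant exponent -/
noncomputable def cst (k N : ℕ) : Fin k →₀ ℕ := Finsupp.equivFunOnFinite.symm fun _ => N

@[simp] lemma cst_apply {k N : ℕ} (i : Fin k) : cst k N i = N := rfl

lemma mem_Iic_cst {k N : ℕ} {e : Fin k →₀ ℕ} :
    e ∈ Finset.Iic (cst k N) ↔ ∀ i, e i ≤ N := by
  rw [Finset.mem_Iic, Finsupp.le_def]; simp

lemma coeff_msubst_def {k l : ℕ} (f : MvPowerSeries (Fin k) R)
    (a : Fin k → MvPowerSeries (Fin l) R) (m : Fin l →₀ ℕ) :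
    coeff m (msubst f a) =
      ∑ e ∈ Finset.Iic (cst k (deg m)), coeff e f * coeff m (∏ i, a i ^ e i) := rfl

lemma vanish_pow {l : ℕ} {f : MvPowerSeries (Fin l) R}
    (hf : constantCoeff f = 0) :
    ∀ (n : ℕ) (m : Fin l →₀ ℕ), deg m < n → coeff m (f ^ n) = 0 := by
  intro n
  induction n with
  | zero => exact fun m hm => absurd hm (Nat.not_lt_zero _)
  | succ n ih =>
    intro m hm
    rw [pow_succ', MvPowerSeries.coeff_mul]
    apply Finset.sum_eq_zero
    rintro ⟨p, q⟩ hpq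
    rw [Finset.HasAntidiagonal.mem_antidiagonal] at hpq
    by_cases hp : p = 0
    · subst hp
      simp only [MvPowerSeries.coeff_zero_eq_constantCoeff]
      rw [hf, zero_mul]
    · have h1 : 1 ≤ deg p := by
        rcases Nat.eq_zero_or_pos (deg p) with h | h
        · exact absurd (deg_eq_zero h) hp
        · exact h
      have hdq : deg q < n := by
        have := deg_add p q
        rw [hpq] at this
        omega
      rw [ih q hdq, mul_zero]

lemma vanish_prod {l k : ℕ} {a : Fin k → MvPowerSeries (Fin l) R}
    (ha : ∀ i, constantCoeff (a i) = 0) (e : Fin k →₀ ℕ) :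
    ∀ (s : Finset (Fin k)) (m : Fin l →₀ ℕ), deg m < ∑ i ∈ s, e i →
      coeff m (∏ i ∈ s, a i ^ e i) = 0 := by
  intro s
  induction s using Finset.induction_on with
  | empty => intro m hm; simp at hm
  | @insert x s hx ih =>
    intro m hm
    rw [Finset.prod_insert hx, MvPowerSeries.coeff_mul]
    rw [Finset.sum_insert hx] at hm
    apply Finset.sum_eq_zero
    rintro ⟨p, q⟩ hpq
    rw [Finset.HasAntidiagonal.mem_antidiagonal] at hpq
    have hd : deg p + deg q = deg m := by rw [← deg_add, hpq]
    by_cases hp : deg p < e x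
    · rw [vanish_pow (ha x) _ p hp, zero_mul]
    · have : deg q < ∑ i ∈ s, e i := by omega
      rw [ih q this, mul_zero]

lemma vanish_prod_univ {l k : ℕ} {a : Fin k → MvPowerSeries (Fin l) R}
    (ha : ∀ i, constantCoeff (a i) = 0) {e : Fin k →₀ ℕ} {m : Fin l →₀ ℕ}
    (h : deg m < deg e) : coeff m (∏ i, a i ^ e i) = 0 :=
  vanish_prod ha e Finset.univ m (by rwa [← deg_eq_sum_univ])

lemma coeff_msubst {k l : ℕ} (f : MvPowerSeries (Fin k) R)
    {a : Fin k → MvPowerSeries (Fin l) R}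
    (ha : ∀ i, constantCoeff (a i) = 0) (m : Fin l →₀ ℕ)
    {S : Finset (Fin k →₀ ℕ)} (hS : Finset.Iic (cst k (deg m)) ⊆ S) :
    coeff m (msubst f a) = ∑ e ∈ S, coeff e f * coeff m (∏ i, a i ^ e i) := by
  rw [coeff_msubst_def]
  apply Finset.sum_subset hS
  intro e _ he
  have : ¬ ∀ i, e i ≤ deg m := fun h => he (mem_Iic_cst.mpr h)
  push_neg at this
  obtain ⟨i, hi⟩ := this
  have : deg m < deg e := lt_of_lt_of_le hi (apply_le_deg e i)
  rw [vanish_prod_univ ha this, mul_zero]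

end Aux

section Aux2
variable {R : Type*} [CommRing R] {k l : ℕ} {a : Fin k → MvPowerSeries (Fin l) R}

lemma constantCoeff_msubst (f : MvPowerSeries (Fin k) R)
    (a : Fin k → MvPowerSeries (Fin l) R) :
    constantCoeff (msubst f a) = constantCoeff f := by
  rw [← MvPowerSeries.coeff_zero_eq_constantCoeff, ← MvPowerSeries.coeff_zero_eq_constantCoeff,
    coeff_msubst_def]
  rw [Finset.sum_eq_single 0]
  · simp
  · intro e he hne
    exfalso
    apply hne
    rw [mem_Iic_cst] at he
    ext i
    simpa [deg_zero] using he i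
  · intro h
    exact absurd (Finset.mem_Iic.mpr zero_le) h

lemma msubst_one (ha : ∀ i, constantCoeff (a i) = 0) :
    msubst (1 : MvPowerSeries (Fin k) R) a = 1 := by
  ext m
  rw [coeff_msubst_def, Finset.sum_eq_single 0]
  · simp
  · intro e _ hne
    rw [MvPowerSeries.coeff_one, if_neg hne, zero_mul]
  · intro h
    exact absurd (Finset.mem_Iic.mpr zero_le) h

lemma msubst_mul (f g : MvPowerSeries (Fin k) R)
    (ha : ∀ i, constantCoeff (a i) = 0) :
    msubst (f * g) a = msubst f a * msubst g a := by
  classical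
  ext m
  set N := deg m with hN
  set T : Finset (Fin k →₀ ℕ) := Finset.Iic (cst k N) with hT
  set G : (Fin k →₀ ℕ) × (Fin k →₀ ℕ) → R := fun uv =>
    coeff uv.1 f * coeff uv.2 g * coeff m (∏ i, a i ^ (uv.1 + uv.2) i) with hG
  have key : ∀ u v : Fin k →₀ ℕ,
      coeff m ((∏ i, a i ^ u i) * (∏ i, a i ^ v i)) = coeff m (∏ i, a i ^ (u + v) i) := by
    intro u v
    rw [← Finset.prod_mul_distrib]
    congr 1
    exact Finset.prod_congr rfl fun i _ => by rw [Finsupp.add_apply, pow_add]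
  have hmemU : ∀ uv : (Fin k →₀ ℕ) × (Fin k →₀ ℕ),
      uv ∈ T.biUnion Finset.HasAntidiagonal.antidiagonal ↔ uv.1 + uv.2 ∈ T := by
    intro uv
    simp only [Finset.mem_biUnion, Finset.HasAntidiagonal.mem_antidiagonal]
    constructor
    · rintro ⟨e, he, rfl⟩; exact he
    · intro h; exact ⟨_, h, rfl⟩
  have hUsub : T.biUnion Finset.HasAntidiagonal.antidiagonal ⊆ T ×ˢ T := by
    intro uv huv
    rw [hmemU] at huv
    rw [Finset.mem_product, hT, Finset.mem_Iic, Finset.mem_Iic]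
    rw [hT, Finset.mem_Iic] at huv
    exact ⟨le_trans le_self_add huv, le_trans le_add_self huv⟩
  have lhs : coeff m (msubst (f * g) a) = ∑ uv ∈ T.biUnion Finset.HasAntidiagonal.antidiagonal, G uv := by
    rw [coeff_msubst_def, Finset.sum_biUnion]
    · apply Finset.sum_congr rfl
      intro e he
      rw [MvPowerSeries.coeff_mul, Finset.sum_mul]
      apply Finset.sum_congr rfl
      rintro ⟨u, v⟩ huv
      rw [Finset.HasAntidiagonal.mem_antidiagonal] at huv
      simp only [hG, huv]
    · intro e₁ _ e₂ _ hne
      simp only [Function.onFun]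
      rw [Finset.disjoint_left]
      rintro ⟨u, v⟩ h1 h2
      rw [Finset.HasAntidiagonal.mem_antidiagonal] at h1 h2
      exact hne (h1 ▸ h2)
  have rhs : coeff m (msubst f a * msubst g a) = ∑ uv ∈ T ×ˢ T, G uv := by
    rw [MvPowerSeries.coeff_mul]
    have step : ∀ pq ∈ Finset.HasAntidiagonal.antidiagonal m,
        coeff pq.1 (msubst f a) * coeff pq.2 (msubst g a) =
          ∑ uv ∈ T ×ˢ T, coeff uv.1 f * coeff uv.2 g *
            (coeff pq.1 (∏ i, a i ^ uv.1 i) * coeff pq.2 (∏ i, a i ^ uv.2 i)) := by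
      rintro ⟨p, q⟩ hpq
      rw [Finset.HasAntidiagonal.mem_antidiagonal] at hpq
      have hp : Finset.Iic (cst k (deg p)) ⊆ T := by
        apply Finset.Iic_subset_Iic.mpr
        rw [Finsupp.le_def]
        intro i
        simp only [cst_apply]
        have : deg p ≤ N := by
          rw [hN, ← hpq, deg_add]; exact Nat.le_add_right _ _
        exact this
      have hq : Finset.Iic (cst k (deg q)) ⊆ T := by
        apply Finset.Iic_subset_Iic.mpr
        rw [Finsupp.le_def]
        intro i
        simp only [cst_apply]
        have : deg q ≤ N := by
          rw [hN, ← hpq, deg_add]; exact Nat.le_add_left _ _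
        exact this
      rw [coeff_msubst f ha p hp, coeff_msubst g ha q hq, Finset.sum_mul_sum,
        ← Finset.sum_product']
      apply Finset.sum_congr rfl
      rintro ⟨u, v⟩ _
      ring
    rw [Finset.sum_congr rfl step, Finset.sum_comm]
    apply Finset.sum_congr rfl
    rintro ⟨u, v⟩ _
    rw [← Finset.mul_sum, ← MvPowerSeries.coeff_mul, key]
  rw [lhs, rhs]
  apply Finset.sum_subset hUsub
  rintro ⟨u, v⟩ _ huv
  rw [hmemU] at huv
  have : ¬ (u + v) ≤ cst k N := fun h => huv (Finset.mem_Iic.mpr h)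
  rw [Finsupp.le_def] at this
  push_neg at this
  obtain ⟨i, hi⟩ := this
  simp only [cst_apply] at hi
  have : deg m < deg (u + v) := lt_of_lt_of_le hi (apply_le_deg _ i)
  simp only [hG]
  rw [vanish_prod_univ ha this, mul_zero]

lemma msubst_pow (f : MvPowerSeries (Fin k) R)
    (ha : ∀ i, constantCoeff (a i) = 0) (n : ℕ) :
    msubst (f ^ n) a = msubst f a ^ n := by
  induction n with
  | zero => simpa using msubst_one ha
  | succ n ih => rw [pow_succ, pow_succ, msubst_mul _ _ ha, ih]

lemma msubst_prod {ι : Type*} [DecidableEq ι] (s : Finset ι) (F : ι → MvPowerSeries (Fin k) R)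
    (ha : ∀ i, constantCoeff (a i) = 0) :
    msubst (∏ i ∈ s, F i) a = ∏ i ∈ s, msubst (F i) a := by
  induction s using Finset.induction_on with
  | empty => simpa using msubst_one ha
  | @insert x s hx ih =>
    rw [Finset.prod_insert hx, Finset.prod_insert hx, msubst_mul _ _ ha, ih]

lemma msubst_prod_pow {j : ℕ} (g : Fin j → MvPowerSeries (Fin k) R)
    (d : Fin j →₀ ℕ) (ha : ∀ i, constantCoeff (a i) = 0) :
    msubst (∏ i, g i ^ d i) a = ∏ i, msubst (g i) a ^ d i := by
  rw [msubst_prod _ _ ha]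
  exact Finset.prod_congr rfl fun i _ => msubst_pow _ ha _

lemma msubst_X (ha : ∀ i, constantCoeff (a i) = 0) (i : Fin k) :
    msubst (X i) a = a i := by
  classical
  ext m
  rw [coeff_msubst (X i) ha m
    (S := insert (Finsupp.single i 1) (Finset.Iic (cst k (deg m))))
    (Finset.subset_insert _ _)]
  rw [Finset.sum_eq_single (Finsupp.single i 1)]
  · rw [MvPowerSeries.coeff_X, if_pos rfl, one_mul]
    congr 1
    rw [Finset.prod_eq_single i]
    · rw [Finsupp.single_eq_same, pow_one]
    · intro j _ hj
      rw [Finsupp.single_eq_of_ne' (Ne.symm hj), pow_zero]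
    · intro h; exact absurd (Finset.mem_univ i) h
  · intro e _ hne
    rw [MvPowerSeries.coeff_X, if_neg ?_, zero_mul]
    exact fun h => hne (by exact h)
  · intro h
    exact absurd (Finset.mem_insert_self _ _) h

lemma msubst_assoc {j : ℕ} (f : MvPowerSeries (Fin k) R)
    (g : Fin k → MvPowerSeries (Fin j) R) (a : Fin j → MvPowerSeries (Fin l) R)
    (hg : ∀ i, constantCoeff (g i) = 0)
    (ha : ∀ i, constantCoeff (a i) = 0) :
    msubst (msubst f g) a = msubst f (fun i => msubst (g i) a) := by
  ext m
  set N := deg m with hN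
  set T : Finset (Fin j →₀ ℕ) := Finset.Iic (cst j N) with hT
  set D : Finset (Fin k →₀ ℕ) := Finset.Iic (cst k ((j + 1) * N)) with hD
  have hmsub : ∀ i, constantCoeff (msubst (g i) a) = 0 := fun i => by
    rw [constantCoeff_msubst]; exact hg i
  have hDN : Finset.Iic (cst k N) ⊆ D := by
    apply Finset.Iic_subset_Iic.mpr
    rw [Finsupp.le_def]
    intro i
    simp only [cst_apply]
    calc N = 1 * N := (one_mul N).symm
    _ ≤ (j + 1) * N := Nat.mul_le_mul_right _ (by omega)
  have step1 : ∀ e ∈ T, coeff e (msubst f g) * coeff m (∏ i, a i ^ e i)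
      = ∑ d ∈ D, coeff d f * (coeff e (∏ i, g i ^ d i) * coeff m (∏ i, a i ^ e i)) := by
    intro e he
    have hsub : Finset.Iic (cst k (deg e)) ⊆ D := by
      apply Finset.Iic_subset_Iic.mpr
      rw [Finsupp.le_def]
      intro i
      simp only [cst_apply]
      have : deg e ≤ j * N := by
        rw [deg_eq_sum_univ]
        calc ∑ i, e i ≤ ∑ _i : Fin j, N :=
          Finset.sum_le_sum fun i _ => mem_Iic_cst.mp (hT ▸ he) i
        _ = j * N := by simp [Finset.sum_const, mul_comm]
      calc deg e ≤ j * N := this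
      _ ≤ (j + 1) * N := Nat.mul_le_mul_right _ (by omega)
    rw [coeff_msubst f hg e hsub, Finset.sum_mul]
    exact Finset.sum_congr rfl fun d _ => by ring
  rw [coeff_msubst_def, Finset.sum_congr rfl step1, Finset.sum_comm,
    coeff_msubst f hmsub m hDN]
  apply Finset.sum_congr rfl
  intro d _
  rw [← Finset.mul_sum]
  congr 1
  rw [← msubst_prod_pow g d ha, coeff_msubst_def]

end Aux2

section Aux3
variable {R : Type*} [CommRing R] {k l : ℕ}

/-- one-variable outer substitution as a sum over powers -/
lemma coeff_msubst_one_var (u : MvPowerSeries (Fin 1) R)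
    {g : MvPowerSeries (Fin l) R} (hg : constantCoeff g = 0) (m : Fin l →₀ ℕ) :
    coeff m (msubst u ![g]) =
      ∑ t ∈ Finset.range (deg m + 1), coeff (Finsupp.single 0 t) u * coeff m (g ^ t) := by
  classical
  have ha : ∀ j : Fin 1, constantCoeff (![g] j) = 0 := by
    intro j
    have : j = 0 := Subsingleton.elim _ _
    rw [this]; simpa using hg
  have hsub : Finset.Iic (cst 1 (deg m)) ⊆
      (Finset.range (deg m + 1)).image (Finsupp.single 0) := by
    intro e he
    rw [mem_Iic_cst] at he
    rw [Finset.mem_image]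
    refine ⟨e 0, Finset.mem_range.mpr (Nat.lt_succ_of_le (he 0)), ?_⟩
    refine Finsupp.ext fun i => ?_
    rw [Subsingleton.elim i (0 : Fin 1), Finsupp.single_eq_same]
  rw [coeff_msubst u ha m hsub, Finset.sum_image ?inj]
  case inj =>
    intro t₁ _ t₂ _ h
    have := DFunLike.congr_fun h 0
    simpa using this
  apply Finset.sum_congr rfl
  intro t _
  congr 2
  rw [Fin.prod_univ_one, Matrix.cons_val_zero, Finsupp.single_eq_same]

/-- same low-order coefficients implies same coefficients of powers up to the bound -/
lemma coeff_pow_congr_low {f f' : MvPowerSeries (Fin l) R}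
    (hf : constantCoeff f = 0)
    (h : ∀ m', deg m' ≤ 1 → coeff m' f = coeff m' f') :
    ∀ (n : ℕ) (m : Fin l →₀ ℕ), deg m ≤ n → coeff m (f ^ n) = coeff m (f' ^ n) := by
  classical
  have hf' : constantCoeff f' = 0 := by
    rw [← MvPowerSeries.coeff_zero_eq_constantCoeff] at hf ⊢
    rw [← h 0 (by simp [deg_zero]), hf]
  intro n
  induction n with
  | zero => intro m _; rfl
  | succ n ih =>
    intro m hm
    rw [pow_succ', pow_succ', MvPowerSeries.coeff_mul, MvPowerSeries.coeff_mul]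
    apply Finset.sum_congr rfl
    rintro ⟨p, q⟩ hpq
    rw [Finset.HasAntidiagonal.mem_antidiagonal] at hpq
    have hd : deg p + deg q = deg m := by rw [← deg_add, hpq]
    by_cases hp0 : p = 0
    · subst hp0
      simp only [MvPowerSeries.coeff_zero_eq_constantCoeff]
      rw [hf, hf', zero_mul, zero_mul]
    · have hp1 : 1 ≤ deg p := by
        rcases Nat.eq_zero_or_pos (deg p) with hz | hz
        · exact absurd (deg_eq_zero hz) hp0
        · exact hz
      by_cases hp : deg p ≤ 1
      · have hq : deg q ≤ n := by omega
        rw [h p hp, ih q hq]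
      · have hq : deg q < n := by omega
        rw [vanish_pow hf n q hq, vanish_pow hf' n q hq, mul_zero, mul_zero]

lemma coeff_prod_congr_low {a a' : Fin k → MvPowerSeries (Fin l) R}
    (ha : ∀ i, constantCoeff (a i) = 0)
    (h : ∀ i m', deg m' ≤ 1 → coeff m' (a i) = coeff m' (a' i)) (e : Fin k →₀ ℕ) :
    ∀ (s : Finset (Fin k)) (m : Fin l →₀ ℕ), deg m ≤ ∑ i ∈ s, e i →
      coeff m (∏ i ∈ s, a i ^ e i) = coeff m (∏ i ∈ s, a' i ^ e i) := by
  classical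
  have ha' : ∀ i, constantCoeff (a' i) = 0 := by
    intro i
    rw [← MvPowerSeries.coeff_zero_eq_constantCoeff, ← h i 0 (by simp [deg_zero])]
    exact ha i
  intro s
  induction s using Finset.induction_on with
  | empty => intro m _; rfl
  | @insert x s hx ih =>
    intro m hm
    rw [Finset.prod_insert hx, Finset.prod_insert hx, MvPowerSeries.coeff_mul,
      MvPowerSeries.coeff_mul]
    rw [Finset.sum_insert hx] at hm
    apply Finset.sum_congr rfl
    rintro ⟨p, q⟩ hpq
    rw [Finset.HasAntidiagonal.mem_antidiagonal] at hpq
    have hd : deg p + deg q = deg m := by rw [← deg_add, hpq]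
    rcases lt_trichotomy (deg p) (e x) with hp | hp | hp
    · rw [vanish_pow (ha x) _ p hp, vanish_pow (ha' x) _ p hp, zero_mul, zero_mul]
    · have hq : deg q ≤ ∑ i ∈ s, e i := by omega
      rw [coeff_pow_congr_low (ha x) (h x) _ p (le_of_eq hp), ih q hq]
    · have hq : deg q < ∑ i ∈ s, e i := by omega
      rw [vanish_prod ha e s q hq, vanish_prod ha' e s q hq, mul_zero, mul_zero]

/-- powers of two series agreeing below degree n agree a bit beyond -/
lemma coeff_pow_congr2 {A B : MvPowerSeries (Fin l) R}
    (hA : constantCoeff A = 0) (hB : constantCoeff B = 0) {n : ℕ}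
    (h : ∀ m', deg m' < n → coeff m' A = coeff m' B) :
    ∀ (j : ℕ) (m : Fin l →₀ ℕ), deg m < n + j →
      coeff m (A ^ (j + 1)) = coeff m (B ^ (j + 1)) := by
  classical
  intro j
  induction j with
  | zero =>
    intro m hm
    rw [pow_one, pow_one]
    exact h m (by omega)
  | succ j ih =>
    intro m hm
    rw [pow_succ' A (j + 1), pow_succ' B (j + 1), MvPowerSeries.coeff_mul,
      MvPowerSeries.coeff_mul]
    apply Finset.sum_congr rfl
    rintro ⟨p, q⟩ hpq
    rw [Finset.HasAntidiagonal.mem_antidiagonal] at hpq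
    have hd : deg p + deg q = deg m := by rw [← deg_add, hpq]
    by_cases hp0 : p = 0
    · subst hp0
      simp only [MvPowerSeries.coeff_zero_eq_constantCoeff]
      rw [hA, hB, zero_mul, zero_mul]
    · have hp1 : 1 ≤ deg p := by
        rcases Nat.eq_zero_or_pos (deg p) with hz | hz
        · exact absurd (deg_eq_zero hz) hp0
        · exact hz
      by_cases hq : deg q < j + 1
      · rw [vanish_pow hA _ q hq, vanish_pow hB _ q hq, mul_zero, mul_zero]
      · push_neg at hq
        have hpn : deg p < n := by omega
        have hqn : deg q < n + j := by omega
        rw [h p hpn, ih q hqn]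

lemma prod_monomial {ι : Type*} [DecidableEq ι] (s : Finset ι)
    (μ : ι → (Fin l →₀ ℕ)) (b : ι → R) :
    ∏ i ∈ s, MvPowerSeries.monomial (μ i) (b i) =
      MvPowerSeries.monomial (∑ i ∈ s, μ i) (∏ i ∈ s, b i) := by
  induction s using Finset.induction_on with
  | empty => simp
  | @insert x s hx ih =>
    rw [Finset.prod_insert hx, Finset.prod_insert hx, Finset.sum_insert hx, ih,
      MvPowerSeries.monomial_mul_monomial]

lemma prod_CX_pow (c : R) (e : Fin k →₀ ℕ) :
    ∏ i, (MvPowerSeries.C (σ := Fin k) (R := R) c * X i) ^ e i =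
      MvPowerSeries.monomial e (c ^ deg e) := by
  classical
  have : ∀ i : Fin k, (MvPowerSeries.C (σ := Fin k) (R := R) c * X i) ^ e i =
      MvPowerSeries.monomial (Finsupp.single i (e i)) (c ^ e i) := by
    intro i
    rw [mul_pow, ← map_pow, MvPowerSeries.X_pow_eq]
    have : MvPowerSeries.C (σ := Fin k) (R := R) (c ^ e i) =
        MvPowerSeries.monomial 0 (c ^ e i) := rfl
    rw [this, MvPowerSeries.monomial_mul_monomial, zero_add, mul_one]
  have hsum : (∑ i : Fin k, Finsupp.single i (e i)) = e := by
    refine Finsupp.ext fun j => ?_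
    rw [Finsupp.finset_sum_apply, Finset.sum_eq_single j]
    · rw [Finsupp.single_eq_same]
    · intro i _ hi
      rw [Finsupp.single_eq_of_ne' hi]
    · intro hj; exact absurd (Finset.mem_univ j) hj
  rw [Finset.prod_congr rfl fun i _ => this i, _root_.prod_monomial, hsum,
    Finset.prod_pow_eq_pow_sum, ← deg_eq_sum_univ]

end Aux3


section Aux4
variable {R : Type*} [CommRing R] {k l : ℕ}

lemma prod_pow_single (a : Fin k → MvPowerSeries (Fin l) R) (i : Fin k) :
    ∏ j, a j ^ (Finsupp.single i 1) j = a i := by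
  classical
  rw [Finset.prod_eq_single i]
  · rw [Finsupp.single_eq_same, pow_one]
  · intro j _ hj
    rw [Finsupp.single_eq_of_ne' (Ne.symm hj), pow_zero]
  · intro h; exact absurd (Finset.mem_univ i) h

lemma msubst_assoc₁ (f : PS R) (g : MvPowerSeries (Fin k) R)
    (a : Fin k → MvPowerSeries (Fin l) R) (hg : constantCoeff g = 0)
    (ha : ∀ i, constantCoeff (a i) = 0) :
    msubst (msubst f ![g]) a = msubst f ![msubst g a] := by
  rw [msubst_assoc f ![g] a (fun j => by rw [Subsingleton.elim j (0 : Fin 1)]; simpa using hg) ha]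
  congr 1
  funext j; fin_cases j; rfl

lemma fin2_deg_one {m : Fin 2 →₀ ℕ} (h : deg m = 1) :
    m = Finsupp.single 0 1 ∨ m = Finsupp.single 1 1 := by
  have hs := deg_eq_sum_univ m
  rw [Fin.sum_univ_two, h] at hs
  rcases Nat.eq_zero_or_pos (m 0) with h0 | h0
  · refine Or.inr (Finsupp.ext fun j => ?_)
    fin_cases j <;> simp [Finsupp.single_apply] <;> omega
  · refine Or.inl (Finsupp.ext fun j => ?_)
    fin_cases j <;> simp [Finsupp.single_apply] <;> omega

lemma lin_coeff_v {d : ℕ} (u : PS R) (hu0 : constantCoeff u = 0) (i : Fin d)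
    (m' : Fin d →₀ ℕ) (h1 : deg m' ≤ 1) :
    coeff m' (msubst u ![X i]) =
      coeff m' (MvPowerSeries.C (σ := Fin d) (R := R) (d0 u) * X i) := by
  classical
  have hCX : MvPowerSeries.C (σ := Fin d) (R := R) (d0 u) * X i =
      MvPowerSeries.monomial (Finsupp.single i 1) (d0 u) := by
    have e1 : (MvPowerSeries.C (σ := Fin d) (R := R) (d0 u)) = MvPowerSeries.monomial 0 (d0 u) := rfl
    have e2 : (X i : MvPowerSeries (Fin d) R) =
        MvPowerSeries.monomial (Finsupp.single i 1) 1 := rfl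
    rw [e1, e2, MvPowerSeries.monomial_mul_monomial, zero_add, mul_one]
  rw [coeff_msubst_one_var u (MvPowerSeries.constantCoeff_X i) m', hCX,
    MvPowerSeries.coeff_monomial]
  have hsne : (Finsupp.single i 1 : Fin d →₀ ℕ) ≠ 0 := by
    intro h
    have := DFunLike.congr_fun h i
    rw [Finsupp.single_eq_same] at this
    simp at this
  rcases Nat.le_one_iff_eq_zero_or_eq_one.mp h1 with h0 | h0
  · have hm0 : m' = 0 := deg_eq_zero h0
    subst hm0
    rw [deg_zero, Finset.sum_range_one, Finsupp.single_zero, pow_zero,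
      if_neg (fun h => hsne h.symm)]
    have : coeff (0 : Fin 1 →₀ ℕ) u = 0 := by
      rw [MvPowerSeries.coeff_zero_eq_constantCoeff]; exact hu0
    rw [this, zero_mul]
  · rw [h0, Finset.sum_range_succ, Finset.sum_range_one, Finsupp.single_zero, pow_zero, pow_one]
    have hm'ne : m' ≠ 0 := ne_zero_of_deg (by omega)
    rw [MvPowerSeries.coeff_one, if_neg hm'ne, mul_zero, zero_add, MvPowerSeries.coeff_X]
    by_cases hmi : m' = Finsupp.single i 1
    · rw [if_pos hmi, if_pos hmi, mul_one]
      rfl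
    · rw [if_neg hmi, if_neg hmi, mul_zero]

lemma single_one_ne_zero {d : ℕ} (i : Fin d) : (Finsupp.single i 1 : Fin d →₀ ℕ) ≠ 0 := by
  intro hcontra
  have := DFunLike.congr_fun hcontra i
  rw [Finsupp.single_eq_same] at this
  simp at this

lemma single_one_ne {d : ℕ} {i j : Fin d} (hij : i ≠ j) :
    (Finsupp.single i 1 : Fin d →₀ ℕ) ≠ Finsupp.single j 1 := by
  intro hcontra
  have := DFunLike.congr_fun hcontra i
  rw [Finsupp.single_eq_same, Finsupp.single_eq_of_ne' (Ne.symm hij)] at this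
  simp at this

lemma cons_const0 {l : ℕ} (g : MvPowerSeries (Fin l) R) (hg : constantCoeff g = 0) :
    ∀ j : Fin 1, constantCoeff ((![g] : Fin 1 → MvPowerSeries (Fin l) R) j) = 0 :=
  fun j => by rw [Subsingleton.elim j (0 : Fin 1)]; simpa using hg

end Aux4

section Unique
variable {R : Type*} [CommRing R]

lemma main_unique [IsDomain R] {u : PS R} (huS : Stable u)
    {A B : MvPowerSeries (Fin 2) R}
    (hA0 : constantCoeff A = 0) (hB0 : constantCoeff B = 0)
    (hlin : ∀ m : Fin 2 →₀ ℕ, deg m ≤ 1 → coeff m A = coeff m B)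
    (hAeq : msubst A (fun i => msubst u ![X i]) = msubst u ![A])
    (hBeq : msubst B (fun i => msubst u ![X i]) = msubst u ![B]) :
    A = B := by
  classical
  obtain ⟨hu0, hc0, hcroot⟩ := huS
  set c := d0 u with hc
  set v : Fin 2 → MvPowerSeries (Fin 2) R := fun i => msubst u ![X i] with hv
  have hv0 : ∀ i, constantCoeff (v i) = 0 := fun i => by
    rw [hv]
    show constantCoeff (msubst u ![X i]) = 0
    rw [constantCoeff_msubst]; exact hu0
  have hvlin : ∀ (i : Fin 2) (m' : Fin 2 →₀ ℕ), deg m' ≤ 1 →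
      coeff m' (v i) = coeff m' (MvPowerSeries.C (σ := Fin 2) (R := R) c * X i) :=
    fun i m' h => lin_coeff_v u hu0 i m' h
  have key : ∀ N : ℕ, ∀ m : Fin 2 →₀ ℕ, deg m = N → coeff m A = coeff m B := by
    intro N
    induction N using Nat.strong_induction_on with
    | _ N IH =>
    intro m hm
    by_cases hN1 : N ≤ 1
    · exact hlin m (le_trans (le_of_eq hm) hN1)
    push_neg at hN1
    have hlow : ∀ m' : Fin 2 →₀ ℕ, deg m' < N → coeff m' A = coeff m' B :=
      fun m' h => IH (deg m') h m' rfl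
    have hvE : coeff m (msubst A v) - coeff m (msubst B v)
        = (coeff m A - coeff m B) * c ^ N := by
      rw [coeff_msubst_def, coeff_msubst_def, ← Finset.sum_sub_distrib]
      rw [Finset.sum_eq_single m]
      · rw [← sub_mul]
        congr 1
        rw [coeff_prod_congr_low hv0 hvlin m Finset.univ m
          (by rw [← deg_eq_sum_univ]), prod_CX_pow, MvPowerSeries.coeff_monomial,
          if_pos rfl, hm]
      · intro e he hne
        rw [← sub_mul]
        rcases lt_trichotomy (deg e) N with hd | hd | hd
        · rw [hlow e hd, sub_self, zero_mul]
        · rw [coeff_prod_congr_low hv0 hvlin e Finset.univ m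
            (by rw [← deg_eq_sum_univ, hd, hm]), prod_CX_pow,
            MvPowerSeries.coeff_monomial, if_neg (fun hh => hne hh.symm), mul_zero]
        · rw [vanish_prod_univ hv0 (by omega : deg m < deg e), mul_zero]
      · intro hm'
        exact absurd (mem_Iic_cst.mpr fun i => hm ▸ apply_le_deg m i) hm'
    have huE' : coeff m (msubst u ![A]) - coeff m (msubst u ![B])
        = c * (coeff m A - coeff m B) := by
      rw [coeff_msubst_one_var u hA0, coeff_msubst_one_var u hB0, ← Finset.sum_sub_distrib]
      have hsimp : ∀ t, coeff (Finsupp.single 0 t) u * coeff m (A ^ t)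
          - coeff (Finsupp.single 0 t) u * coeff m (B ^ t)
          = coeff (Finsupp.single 0 t) u * (coeff m (A ^ t) - coeff m (B ^ t)) :=
        fun t => (mul_sub _ _ _).symm
      rw [Finset.sum_congr rfl fun t _ => hsimp t, Finset.sum_eq_single 1]
      · rw [pow_one, pow_one]
        rfl
      · intro t _ hne
        rcases t with _ | t
        · simp
        · rcases t with _ | j
          · exact absurd rfl hne
          · rw [coeff_pow_congr2 hA0 hB0 hlow (j + 1) m (by omega), sub_self, mul_zero]
      · intro h1
        exact absurd (Finset.mem_range.mpr (by omega)) h1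
    have heq : (coeff m A - coeff m B) * c ^ N = c * (coeff m A - coeff m B) := by
      rw [← hvE, ← huE', hAeq, hBeq]
    have hfactor : (coeff m A - coeff m B) * (c ^ N - c) = 0 := by
      linear_combination heq
    have hcn : c ^ N - c ≠ 0 := by
      have h1 : c ^ (N - 1) - 1 ≠ 0 := sub_ne_zero.mpr (hcroot (N - 1) (by omega))
      have h2 : c ^ N - c = c * (c ^ (N - 1) - 1) := by
        rw [mul_sub, mul_one, ← pow_succ']
        congr 2
        omega
      rw [h2]
      exact mul_ne_zero hc0 h1
    rcases mul_eq_zero.mp hfactor with hz | hz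
    · exact sub_eq_zero.mp hz
    · exact absurd hz hcn
  exact MvPowerSeries.ext fun m => key (deg m) m rfl

end Unique


variable (p : ℕ) [Fact p.Prime] (K : Type*) [Field K] [Algebra ℚ_[p] K]
  [Algebra ℤ_[p] K] [IsScalarTower ℤ_[p] ℚ_[p] K] [FiniteDimensional ℚ_[p] K]

/-- A power series over the ring of integers of a `p`-adic field that commutes with a
stable endomorphism of a formal group law `F` is itself an endomorphism of `F`. -/
theorem stmt3 (F : MvPowerSeries (Fin 2) (integralClosure ℤ_[p] K)) (hF : IsFGL F)
    (u : PS (integralClosure ℤ_[p] K)) (huE : IsEndoFGL F u) (huS : Stable u)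
    (h : PS (integralClosure ℤ_[p] K)) (h0 : constantCoeff h = 0)
    (hcomm : comp h u = comp u h) :
    IsEndoFGL F h := by
  classical
  have hu0 : constantCoeff u = 0 := huE.1
  have huF := huE.2
  have hF0 : constantCoeff F = 0 := by
    have h00 := hF.left 0
    rw [Finsupp.single_zero] at h00
    rw [← MvPowerSeries.coeff_zero_eq_constantCoeff]
    simpa using h00
  have hcomm' : msubst h ![u] = msubst u ![h] := hcomm
  set v : Fin 2 → MvPowerSeries (Fin 2) (integralClosure ℤ_[p] K) := fun i => msubst u ![X i] with hv
  have hXc : ∀ i : Fin 2, constantCoeff (X i : MvPowerSeries (Fin 2) (integralClosure ℤ_[p] K)) = 0 :=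
    fun i => MvPowerSeries.constantCoeff_X i
  have hv0 : ∀ i, constantCoeff (v i) = 0 := fun i => by
    show constantCoeff (msubst u ![X i]) = 0
    rw [constantCoeff_msubst]; exact hu0
  have hveq : ![msubst u ![(X 0 : MvPowerSeries (Fin 2) (integralClosure ℤ_[p] K))], msubst u ![X 1]] = v := by
    funext j; fin_cases j <;> rfl
  have huF' : msubst u ![F] = msubst F v := by rw [huF, hveq]
  set w : Fin 2 → MvPowerSeries (Fin 2) (integralClosure ℤ_[p] K) :=
    ![msubst h ![(X 0 : MvPowerSeries (Fin 2) (integralClosure ℤ_[p] K))], msubst h ![X 1]] with hw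
  have hwi : ∀ i : Fin 2, w i = msubst h ![X i] := by intro i; fin_cases i <;> rfl
  have hw0 : ∀ i, constantCoeff (w i) = 0 := fun i => by
    rw [hwi i, constantCoeff_msubst]; exact h0
  have swap : ∀ g : MvPowerSeries (Fin 2) (integralClosure ℤ_[p] K), constantCoeff g = 0 →
      msubst h ![msubst u ![g]] = msubst u ![msubst h ![g]] := by
    intro g hg
    rw [← msubst_assoc₁ h u ![g] hu0 (cons_const0 g hg), hcomm',
      msubst_assoc₁ u h ![g] h0 (cons_const0 g hg)]
  have hAeq : msubst (msubst h ![F]) v = msubst u ![msubst h ![F]] := by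
    rw [msubst_assoc₁ h F v hF0 hv0, ← huF']
    exact swap F hF0
  have hBeq : msubst (msubst F w) v = msubst u ![msubst F w] := by
    have hLw : ∀ i : Fin 2, msubst (w i) v = msubst u ![w i] := by
      intro i
      rw [hwi i, msubst_assoc₁ h (X i) v (hXc i) hv0, msubst_X hv0 i]
      show msubst h ![msubst u ![X i]] = msubst u ![msubst h ![X i]]
      exact swap (X i) (hXc i)
    have hL : msubst (msubst F w) v = msubst F fun i => msubst u ![w i] := by
      rw [msubst_assoc F w v hw0 hv0]
      exact congrArg (fun g => msubst F g) (funext fun i => hLw i)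
    have hR : msubst u ![msubst F w] = msubst F fun i => msubst u ![w i] := by
      rw [← msubst_assoc₁ u F w hF0 hw0, huF', msubst_assoc F v w hv0 hw0]
      refine congrArg (fun g => msubst F g) (funext fun i => ?_)
      show msubst (msubst u ![X i]) w = msubst u ![w i]
      rw [msubst_assoc₁ u (X i) w (hXc i) hw0, msubst_X hw0 i]
    rw [hL, hR]
  have hch : ∀ i : Fin 2, coeff (Finsupp.single i 1) F = 1 := by
    intro i; fin_cases i
    · simpa using hF.left 1
    · simpa using hF.right 1
  have hlin : ∀ m : Fin 2 →₀ ℕ, deg m ≤ 1 →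
      coeff m (msubst h ![F]) = coeff m (msubst F w) := by
    intro m hm
    rcases Nat.le_one_iff_eq_zero_or_eq_one.mp hm with h0' | h1'
    · have hmz : m = 0 := deg_eq_zero h0'
      subst hmz
      have e1 : coeff (0 : Fin 2 →₀ ℕ) (msubst h ![F]) = 0 := by
        rw [MvPowerSeries.coeff_zero_eq_constantCoeff, constantCoeff_msubst]; exact h0
      have e2 : coeff (0 : Fin 2 →₀ ℕ) (msubst F w) = 0 := by
        rw [MvPowerSeries.coeff_zero_eq_constantCoeff, constantCoeff_msubst]; exact hF0
      rw [e1, e2]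
    · obtain ⟨i, rfl⟩ : ∃ i : Fin 2, m = Finsupp.single i 1 := by
        rcases fin2_deg_one h1' with hcase | hcase
        · exact ⟨0, hcase⟩
        · exact ⟨1, hcase⟩
      have eA : coeff (Finsupp.single i 1) (msubst h ![F])
          = coeff (Finsupp.single 0 1) h * coeff (Finsupp.single i 1) F := by
        rw [coeff_msubst_one_var h hF0 _, deg_single, Finset.sum_range_succ,
          Finset.sum_range_one, Finsupp.single_zero, pow_zero, pow_one,
          MvPowerSeries.coeff_one, if_neg (single_one_ne_zero i), mul_zero, zero_add]
      have eB : coeff (Finsupp.single i 1) (msubst F w)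
          = coeff (Finsupp.single 0 1) h := by
        rw [coeff_msubst F hw0 (Finsupp.single i 1)
          (S := insert (Finsupp.single i 1)
            (Finset.Iic (cst 2 (deg (Finsupp.single i 1)))))
          (Finset.subset_insert _ _)]
        rw [Finset.sum_eq_single (Finsupp.single i 1)]
        · rw [hch i, one_mul, prod_pow_single w i, hwi i,
            coeff_msubst_one_var h (hXc i) _, deg_single, Finset.sum_range_succ,
            Finset.sum_range_one, Finsupp.single_zero, pow_zero, pow_one,
            MvPowerSeries.coeff_one, if_neg (single_one_ne_zero i), mul_zero, zero_add,
            MvPowerSeries.coeff_X, if_pos rfl, mul_one]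
        · intro e he hne
          have he' : e ∈ Finset.Iic (cst 2 (deg (Finsupp.single i 1))) := by
            rcases Finset.mem_insert.mp he with hcase | hcase
            · exact absurd hcase hne
            · exact hcase
          rw [deg_single] at he'
          rcases lt_trichotomy (deg e) 1 with hd | hd | hd
          · have hez : e = 0 := deg_eq_zero (by omega)
            subst hez
            have hprod : (∏ j, w j ^ (0 : Fin 2 →₀ ℕ) j) = 1 := by simp
            rw [hprod, MvPowerSeries.coeff_one, if_neg (single_one_ne_zero i), mul_zero]
          · obtain ⟨j, rfl⟩ : ∃ j : Fin 2, e = Finsupp.single j 1 := by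
              rcases fin2_deg_one hd with hcase | hcase
              · exact ⟨0, hcase⟩
              · exact ⟨1, hcase⟩
            have hji : i ≠ j := fun hji => hne (by rw [hji])
            rw [prod_pow_single w j, hwi j,
              coeff_msubst_one_var h (hXc j) _, deg_single, Finset.sum_range_succ,
              Finset.sum_range_one, Finsupp.single_zero, pow_zero, pow_one,
              MvPowerSeries.coeff_one, if_neg (single_one_ne_zero i), mul_zero, zero_add,
              MvPowerSeries.coeff_X, if_neg (single_one_ne hji), mul_zero, mul_zero]
          · rw [vanish_prod_univ hw0 (by rw [deg_single]; omega), mul_zero]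
        · intro hmem
          exact absurd (Finset.mem_insert_self _ _) hmem
      rw [eA, hch i, mul_one, eB]
  have hA0 : constantCoeff (msubst h ![F]) = 0 := by
    rw [constantCoeff_msubst]; exact h0
  have hB0 : constantCoeff (msubst F w) = 0 := by
    rw [constantCoeff_msubst]; exact hF0
  rw [hv] at hAeq hBeq
  exact ⟨h0, main_unique huS hA0 hB0 hlin hAeq hBeq⟩
end

section
/- Let F and G be formal group laws over O_K. Assume there exist σ ∈ Gal(K̄/K) and a stable endomorphism u of F with σ(z) = u(z) for all z ∈ Tors(F), and that the analogous rigidity conclusion holds for G (any bounded power series sending infinitely many torsion points of G to torsion points of G is an endomorphism of G). If Tors(F) ∩ Tors(G) is infinite, then F = G. -/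
open MvPowerSeries

/-- Evaluation of a multivariate power series at a point of `Cp^k`,
via a ring map on coefficients. -/
noncomputable def evalM {R Cp : Type*} [CommRing R] [NormedField Cp] {k : ℕ}
    (φ : R →+* Cp) (f : MvPowerSeries (Fin k) R) (z : Fin k → Cp) : Cp :=
  ∑' m : Fin k →₀ ℕ, φ (MvPowerSeries.coeff m f) * ∏ i, z i ^ m i

/-- Evaluation of a one-variable power series. -/
noncomputable def eval1 {R Cp : Type*} [CommRing R] [NormedField Cp]
    (φ : R →+* Cp) (f : PS R) (z : Cp) : Cp := evalM φ f ![z]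

/-- The addition induced by a formal group law `F` on the open unit disk. -/
noncomputable def addF {R Cp : Type*} [CommRing R] [NormedField Cp]
    (φ : R →+* Cp) (F : MvPowerSeries (Fin 2) R) (x y : Cp) : Cp := evalM φ F ![x, y]

/-- `n`-fold addition `[n](z)` of a point with itself, for a formal group law. -/
noncomputable def nsmulF {R Cp : Type*} [CommRing R] [NormedField Cp]
    (φ : R →+* Cp) (F : MvPowerSeries (Fin 2) R) : ℕ → Cp → Cp
  | 0, _ => 0
  | n + 1, z => addF φ F z (nsmulF φ F n z)

/-- Torsion points of a formal group law in the open unit disk. -/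
noncomputable def Tors {R Cp : Type*} [CommRing R] [NormedField Cp]
    (φ : R →+* Cp) (F : MvPowerSeries (Fin 2) R) : Set Cp :=
  {z : Cp | ‖z‖ < 1 ∧ ∃ n : ℕ, 0 < n ∧ nsmulF φ F n z = 0}

/-- The embedding of the ring of integers of `K` into `Cp`. -/
noncomputable def intEmb (p : ℕ) [Fact p.Prime] (K : Type*) [Field K]
    [Algebra ℚ_[p] K] [Algebra ℤ_[p] K] [IsScalarTower ℤ_[p] ℚ_[p] K]
    (Cp : Type*) [NormedField Cp] [Algebra K Cp] :
    (integralClosure ℤ_[p] K) →+* Cp :=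
  (algebraMap K Cp).comp (algebraMap (integralClosure ℤ_[p] K) K)

variable (p : ℕ) [Fact p.Prime] (K : Type*) [Field K] [Algebra ℚ_[p] K]
  [Algebra ℤ_[p] K] [IsScalarTower ℤ_[p] ℚ_[p] K] [FiniteDimensional ℚ_[p] K]
variable (Cp : Type*) [NormedField Cp] [CompleteSpace Cp] [IsAlgClosed Cp]
  [IsUltrametricDist Cp] [Algebra K Cp] [Algebra ℚ_[p] Cp] [IsScalarTower ℚ_[p] K Cp]

namespace Aux12
variable {R : Type*} [CommRing R]

def dg {l : ℕ} (m : Fin l →₀ ℕ) : ℕ := ∑ i, m i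

lemma dg_sum {l : ℕ} (m : Fin l →₀ ℕ) : (m.sum fun _ n => n) = dg m :=
  Finsupp.sum_fintype _ _ (fun _ => rfl)

lemma dg_add {l : ℕ} (a b : Fin l →₀ ℕ) : dg (a + b) = dg a + dg b := by
  simp [dg, Finset.sum_add_distrib]

lemma dg_eq_zero {l : ℕ} {m : Fin l →₀ ℕ} (h : dg m = 0) : m = 0 := by
  ext i
  have := Finset.sum_eq_zero_iff.mp h i (Finset.mem_univ i)
  simpa using this

lemma dg_single {l : ℕ} (i : Fin l) (c : ℕ) : dg (Finsupp.single i c) = c := by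
  simp [dg, Finsupp.single_apply]

lemma apply_le_dg {l : ℕ} (m : Fin l →₀ ℕ) (i : Fin l) : m i ≤ dg m :=
  Finset.single_le_sum (f := fun j => m j) (fun _ _ => Nat.zero_le _) (Finset.mem_univ i)

lemma mem_IicE {k : ℕ} {N : ℕ} {e : Fin k →₀ ℕ} :
    e ∈ Finset.Iic (Finsupp.equivFunOnFinite.symm (fun _ : Fin k => N)) ↔ ∀ i, e i ≤ N := by
  simp [Finset.mem_Iic, Finsupp.le_def]

lemma coeff_msubst {k l : ℕ} (f : MvPowerSeries (Fin k) R) (g : Fin k → MvPowerSeries (Fin l) R)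
    (m : Fin l →₀ ℕ) :
    coeff m (msubst f g) = ∑ e ∈ Finset.Iic (Finsupp.equivFunOnFinite.symm
      (fun _ : Fin k => dg m)),
      coeff e f * coeff m (∏ i, g i ^ e i) := by
  rw [coeff_apply]; unfold msubst; rw [dg_sum]

def LB {l : ℕ} (f : MvPowerSeries (Fin l) R) (c : ℕ) : Prop :=
  ∀ m : Fin l →₀ ℕ, dg m < c → coeff m f = 0

lemma LB_one {l : ℕ} {f : MvPowerSeries (Fin l) R} (h : constantCoeff f = 0) : LB f 1 := by
  intro m hm
  have : m = 0 := dg_eq_zero (by omega)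
  subst this
  simpa using h

lemma LB_mul {l : ℕ} {f g : MvPowerSeries (Fin l) R} {a b : ℕ}
    (hf : LB f a) (hg : LB g b) : LB (f * g) (a + b) := by
  classical
  intro m hm
  rw [coeff_mul]
  apply Finset.sum_eq_zero
  intro p hp
  rw [Finset.HasAntidiagonal.mem_antidiagonal] at hp
  have hd : dg p.1 + dg p.2 = dg m := by rw [← dg_add, hp]
  rcases lt_or_ge (dg p.1) a with h | h
  · rw [hf p.1 h, zero_mul]
  · rw [hg p.2 (by omega), mul_zero]

lemma LB_pow {l : ℕ} {f : MvPowerSeries (Fin l) R} (h : LB f 1) (j : ℕ) : LB (f ^ j) j := by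
  induction j with
  | zero => exact fun m hm => absurd hm (Nat.not_lt_zero _)
  | succ j ih => rw [pow_succ]; exact LB_mul ih h

lemma powAgree {l : ℕ} {F G : MvPowerSeries (Fin l) R} {n : ℕ}
    (h : ∀ a : Fin l →₀ ℕ, dg a ≤ n → coeff a F = coeff a G) (j : ℕ) :
    ∀ m : Fin l →₀ ℕ, dg m ≤ n → coeff m (F ^ j) = coeff m (G ^ j) := by
  classical
  induction j with
  | zero => intro m _; rfl
  | succ j ih =>
    intro m hm
    rw [pow_succ, pow_succ, coeff_mul, coeff_mul]
    apply Finset.sum_congr rfl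
    intro p hp
    rw [Finset.HasAntidiagonal.mem_antidiagonal] at hp
    have hd : dg p.1 + dg p.2 = dg m := by rw [← dg_add, hp]
    rw [ih p.1 (by omega), h p.2 (by omega)]

lemma powAgree' {l : ℕ} {F G : MvPowerSeries (Fin l) R} {n : ℕ}
    (hF0 : constantCoeff F = 0) (hG0 : constantCoeff G = 0)
    (h : ∀ a : Fin l →₀ ℕ, dg a ≤ n → coeff a F = coeff a G) {j : ℕ} (hj : 2 ≤ j) :
    ∀ m : Fin l →₀ ℕ, dg m ≤ n + 1 → coeff m (F ^ j) = coeff m (G ^ j) := by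
  classical
  intro m hm
  obtain ⟨j, rfl⟩ : ∃ j', j = j' + 1 := ⟨j - 1, by omega⟩
  rw [pow_succ, pow_succ, coeff_mul, coeff_mul]
  apply Finset.sum_congr rfl
  intro p hp
  rw [Finset.HasAntidiagonal.mem_antidiagonal] at hp
  have hd : dg p.1 + dg p.2 = dg m := by rw [← dg_add, hp]
  by_cases h1 : p.1 = 0
  · rw [h1, coeff_zero_eq_constantCoeff_apply, coeff_zero_eq_constantCoeff_apply,
      map_pow, map_pow, hF0, hG0, zero_pow (by omega), zero_mul, zero_mul]
  by_cases h2 : p.2 = 0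
  · rw [h2, coeff_zero_eq_constantCoeff_apply, coeff_zero_eq_constantCoeff_apply,
      hF0, hG0, mul_zero, mul_zero]
  · have d1 : 1 ≤ dg p.1 := by
      rcases Nat.eq_zero_or_pos (dg p.1) with h | h
      · exact absurd (dg_eq_zero h) h1
      · exact h
    have d2 : 1 ≤ dg p.2 := by
      rcases Nat.eq_zero_or_pos (dg p.2) with h | h
      · exact absurd (dg_eq_zero h) h2
      · exact h
    rw [powAgree h j p.1 (by omega), h p.2 (by omega)]

def OnVar {l : ℕ} (i : Fin l) (f : MvPowerSeries (Fin l) R) : Prop :=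
  ∀ m : Fin l →₀ ℕ, coeff m f ≠ 0 → m = Finsupp.single i (m i)

lemma OnVar.one {l : ℕ} (i : Fin l) : OnVar i (1 : MvPowerSeries (Fin l) R) := by
  classical
  intro m hm
  rw [coeff_one] at hm
  have : m = 0 := by by_contra h; simp [h] at hm
  rw [this]; simp

lemma OnVar.mul {l : ℕ} {i : Fin l} {f g : MvPowerSeries (Fin l) R}
    (hf : OnVar i f) (hg : OnVar i g) : OnVar i (f * g) := by
  classical
  intro m hm
  rw [coeff_mul] at hm
  obtain ⟨p, hp, hne⟩ := Finset.exists_ne_zero_of_sum_ne_zero hm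
  rw [Finset.HasAntidiagonal.mem_antidiagonal] at hp
  have h1 := hf p.1 (left_ne_zero_of_mul hne)
  have h2 := hg p.2 (right_ne_zero_of_mul hne)
  calc m = p.1 + p.2 := hp.symm
    _ = Finsupp.single i (p.1 i) + Finsupp.single i (p.2 i) := by rw [← h1, ← h2]
    _ = Finsupp.single i (p.1 i + p.2 i) := (Finsupp.single_add i _ _).symm
    _ = Finsupp.single i (m i) := by rw [← hp]; simp

lemma OnVar.pow {l : ℕ} {i : Fin l} {f : MvPowerSeries (Fin l) R}
    (hf : OnVar i f) (j : ℕ) : OnVar i (f ^ j) := by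
  induction j with
  | zero => exact OnVar.one i
  | succ j ih => rw [pow_succ]; exact ih.mul hf

lemma fin2_eq (m : Fin 2 →₀ ℕ) :
    m = Finsupp.single 0 (m 0) + Finsupp.single 1 (m 1) := by
  ext j
  fin_cases j <;> simp [Finsupp.single_apply]

lemma fin2_ext {e m : Fin 2 →₀ ℕ} (h0 : e 0 = m 0) (h1 : e 1 = m 1) : e = m := by
  rw [fin2_eq e, fin2_eq m, h0, h1]

lemma fin1_eq (e : Fin 1 →₀ ℕ) : e = Finsupp.single 0 (e 0) := by
  apply Finsupp.ext
  intro j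
  have : j = 0 := Subsingleton.elim _ _
  rw [this]
  simp

lemma coeff_mul_onVar (A B : MvPowerSeries (Fin 2) R) (hA : OnVar 0 A) (hB : OnVar 1 B)
    (m : Fin 2 →₀ ℕ) :
    coeff m (A * B)
      = coeff (Finsupp.single 0 (m 0)) A * coeff (Finsupp.single 1 (m 1)) B := by
  classical
  rw [coeff_mul]
  apply Finset.sum_eq_single_of_mem
    ((Finsupp.single 0 (m 0), Finsupp.single 1 (m 1)) : (Fin 2 →₀ ℕ) × (Fin 2 →₀ ℕ))
  · rw [Finset.HasAntidiagonal.mem_antidiagonal]; exact (fin2_eq m).symm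
  · intro p hp hne
    rw [Finset.HasAntidiagonal.mem_antidiagonal] at hp
    by_contra hzero
    have h1 := hA p.1 (left_ne_zero_of_mul hzero)
    have h2 := hB p.2 (right_ne_zero_of_mul hzero)
    apply hne
    have hz2 : p.2 0 = 0 := by
      conv_lhs => rw [h2]
      simp [Finsupp.single_apply]
    have hz1 : p.1 1 = 0 := by
      conv_lhs => rw [h1]
      simp [Finsupp.single_apply]
    have e0 : p.1 0 = m 0 := by
      have := congrArg (fun f : Fin 2 →₀ ℕ => f 0) hp
      simpa [hz2] using this
    have e1 : p.2 1 = m 1 := by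
      have := congrArg (fun f : Fin 2 →₀ ℕ => f 1) hp
      simpa [hz1] using this
    exact Prod.ext (by rw [h1, e0]) (by rw [h2, e1])

end Aux12

namespace Aux12
variable {R : Type*} [CommRing R]

lemma dg_zero {l : ℕ} : dg (0 : Fin l →₀ ℕ) = 0 := by simp [dg]

lemma prod_fin1 {l : ℕ} (h : MvPowerSeries (Fin l) R) (e : Fin 1 →₀ ℕ) :
    (∏ i, (![h] : Fin 1 → MvPowerSeries (Fin l) R) i ^ e i) = h ^ (e 0) := by
  simp [Fin.prod_univ_one]

lemma prod_fin2 {l : ℕ} (A B : MvPowerSeries (Fin l) R) (e : Fin 2 →₀ ℕ) :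
    (∏ i, (![A, B] : Fin 2 → MvPowerSeries (Fin l) R) i ^ e i) = A ^ (e 0) * B ^ (e 1) := by
  simp [Fin.prod_univ_two]

variable {u : PS R} (hu0 : constantCoeff u = 0)

include hu0 in
lemma constantCoeff_gX {l : ℕ} (i : Fin l) :
    constantCoeff (msubst u ![X i]) = 0 := by
  rw [← coeff_zero_eq_constantCoeff_apply, coeff_msubst]
  apply Finset.sum_eq_zero
  intro e he
  rw [mem_IicE] at he
  have he0 : e 0 = 0 := by have := he 0; rw [dg_zero] at this; omega
  have : e = 0 := by rw [fin1_eq e, he0, Finsupp.single_zero]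
  rw [this]
  rw [coeff_zero_eq_constantCoeff_apply, hu0, zero_mul]

lemma onVar_gX {l : ℕ} (i : Fin l) : OnVar i (msubst u ![X i]) := by
  classical
  intro m hm
  rw [coeff_msubst] at hm
  simp only [prod_fin1] at hm
  obtain ⟨e, he, hne⟩ := Finset.exists_ne_zero_of_sum_ne_zero hm
  have hXne : coeff m ((X i : MvPowerSeries (Fin l) R) ^ e 0) ≠ 0 :=
    right_ne_zero_of_mul hne
  rw [coeff_X_pow] at hXne
  have : m = Finsupp.single i (e 0) := by
    by_contra h
    simp [h] at hXne
  rw [this, Finsupp.single_eq_same]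

lemma coeff_single_one_gX {l : ℕ} (i : Fin l) :
    coeff (Finsupp.single i 1) (msubst u ![X i]) = d0 u := by
  classical
  rw [coeff_msubst]
  simp only [prod_fin1]
  rw [Finset.sum_eq_single_of_mem (Finsupp.single (0 : Fin 1) 1)]
  · rw [Finsupp.single_eq_same, pow_one, coeff_X, if_pos rfl, mul_one]
    rfl
  · rw [mem_IicE]
    intro j
    rw [Subsingleton.elim j 0, Finsupp.single_eq_same, dg_single]
  · intro e _ hne
    have he0 : e 0 ≠ 1 := fun h => hne (by rw [fin1_eq e, h])
    rw [coeff_X_pow, if_neg, mul_zero]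
    intro hcon
    exact he0 ((Finsupp.single_injective i hcon).symm)

include hu0 in
lemma lead_gX {l : ℕ} (i : Fin l) (j : ℕ) :
    coeff (Finsupp.single i j) ((msubst u ![X i]) ^ j) = (d0 u) ^ j := by
  classical
  induction j with
  | zero =>
    rw [Finsupp.single_zero, pow_zero, pow_zero, coeff_zero_eq_constantCoeff_apply, map_one]
  | succ j ih =>
    set g := msubst u ![(X i : MvPowerSeries (Fin l) R)] with hgdef
    rw [pow_succ', coeff_mul]
    rw [Finset.sum_eq_single_of_mem
      ((Finsupp.single i 1, Finsupp.single i j) : (Fin l →₀ ℕ) × (Fin l →₀ ℕ))]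
    · rw [coeff_single_one_gX, ih, ← pow_succ']
    · rw [Finset.HasAntidiagonal.mem_antidiagonal, ← Finsupp.single_add]
      congr 1
      omega
    · intro p hp hne
      rw [Finset.HasAntidiagonal.mem_antidiagonal] at hp
      by_contra hzero
      have h1 := onVar_gX i p.1 (left_ne_zero_of_mul hzero)
      have h2 := (onVar_gX (u := u) i).pow j p.2 (right_ne_zero_of_mul hzero)
      have hsum : p.1 i + p.2 i = j + 1 := by
        have := congrArg (fun f : Fin l →₀ ℕ => f i) hp
        simpa [Finsupp.single_eq_same] using this
      have a1 : 1 ≤ p.1 i := by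
        by_contra hcon
        have : p.1 = 0 := by
          rw [h1, Nat.le_zero.mp (by omega : p.1 i ≤ 0), Finsupp.single_zero]
        apply left_ne_zero_of_mul hzero
        rw [this, coeff_zero_eq_constantCoeff_apply]
        exact constantCoeff_gX hu0 i
      have bj : j ≤ p.2 i := by
        by_contra hcon
        apply right_ne_zero_of_mul hzero
        apply LB_pow (LB_one (constantCoeff_gX hu0 i)) j
        rw [h2, dg_single]
        omega
      have hq1 : p.1 i = 1 := by omega
      have hq2 : p.2 i = j := by omega
      exact hne (Prod.ext (by rw [h1, hq1]) (by rw [h2, hq2]))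

end Aux12

namespace Aux12
variable {R : Type*} [CommRing R]

lemma rigidity [IsDomain R] {F G : MvPowerSeries (Fin 2) R}
    (hF : IsFGL F) (hG : IsFGL G) {u : PS R} (huS : Stable u)
    (hFu : IsEndoFGL F u) (hGu : IsEndoFGL G u) : F = G := by
  classical
  obtain ⟨hu0, hu1ne, hu1nr⟩ := huS
  have hF0 : constantCoeff F = 0 := by
    have := hF.left 0
    rw [Finsupp.single_zero] at this
    simpa using this
  have hG0 : constantCoeff G = 0 := by
    have := hG.left 0
    rw [Finsupp.single_zero] at this
    simpa using this
  have base : ∀ m : Fin 2 →₀ ℕ, (m 0 = 0 ∨ m 1 = 0) → coeff m F = coeff m G := by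
    intro m hm
    rcases hm with h | h
    · have hme : m = Finsupp.single 1 (m 1) := by
        conv_lhs => rw [fin2_eq m]
        rw [h]
        simp
      rw [hme, hF.right, hG.right]
    · have hme : m = Finsupp.single 0 (m 0) := by
        conv_lhs => rw [fin2_eq m]
        rw [h]
        simp
      rw [hme, hF.left, hG.left]
  have dg2 : ∀ m : Fin 2 →₀ ℕ, dg m = m 0 + m 1 := fun m => by
    simp [dg, Fin.sum_univ_two]
  set u1 := d0 u with hu1def
  have key : ∀ N : ℕ, ∀ m : Fin 2 →₀ ℕ, dg m ≤ N → coeff m F = coeff m G := by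
    intro N
    induction N with
    | zero =>
      intro m hm
      apply base
      have := dg2 m
      omega
    | succ N ih =>
      intro m hm
      rcases Nat.lt_or_ge (dg m) (N + 1) with hlt | hge
      · exact ih m (by omega)
      have hdm : dg m = N + 1 := by omega
      rcases Nat.eq_zero_or_pos N with hN | hN
      · apply base
        have := dg2 m
        omega
      -- now N ≥ 1, dg m = N + 1 ≥ 2
      -- Claim 1 : the "u ∘ F" side
      have claim1 : coeff m (msubst u ![F]) - u1 * coeff m F
          = coeff m (msubst u ![G]) - u1 * coeff m G := by
        rw [coeff_msubst, coeff_msubst]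
        simp only [prod_fin1]
        have hmem : (Finsupp.single 0 1 : Fin 1 →₀ ℕ) ∈ Finset.Iic
            (Finsupp.equivFunOnFinite.symm fun _ : Fin 1 => dg m) := by
          rw [mem_IicE]
          intro j
          rw [Subsingleton.elim j 0, Finsupp.single_eq_same]
          omega
        rw [Finset.sum_eq_sum_sdiff_singleton_add hmem, Finset.sum_eq_sum_sdiff_singleton_add hmem]
        have hdiff : ∀ H1 H2 : MvPowerSeries (Fin 2) R,
            constantCoeff H1 = 0 → constantCoeff H2 = 0 →
            (∀ a : Fin 2 →₀ ℕ, dg a ≤ N → coeff a H1 = coeff a H2) →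
            ∑ e ∈ Finset.Iic (Finsupp.equivFunOnFinite.symm fun _ : Fin 1 => dg m) \
              {Finsupp.single 0 1},
              coeff e u * coeff m (H1 ^ e 0)
            = ∑ e ∈ Finset.Iic (Finsupp.equivFunOnFinite.symm fun _ : Fin 1 => dg m) \
              {Finsupp.single 0 1},
              coeff e u * coeff m (H2 ^ e 0) := by
          intro H1 H2 h01 h02 hagree
          apply Finset.sum_congr rfl
          intro e he
          rw [Finset.mem_sdiff, Finset.mem_singleton] at he
          have : e 0 = 0 ∨ e 0 = 1 ∨ 2 ≤ e 0 := by omega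
          rcases this with h | h | h
          · rw [h, pow_zero, pow_zero]
          · exact absurd (by rw [fin1_eq e, h]) he.2
          · rw [powAgree' h01 h02 hagree h m (by omega)]
        rw [hdiff F G hF0 hG0 (fun a ha => ih a ha)]
        have hidx : (Finsupp.single (0 : Fin 1) 1) 0 = 1 := Finsupp.single_eq_same
        have hcu : coeff (Finsupp.single (0 : Fin 1) 1) u = u1 := rfl
        simp only [hidx, pow_one, hcu]
        rw [add_sub_cancel_right, add_sub_cancel_right]
      -- Claim 2 : the "F ∘ (u,u)" side
      set g0 := msubst u ![(X 0 : MvPowerSeries (Fin 2) R)] with hg0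
      set g1 := msubst u ![(X 1 : MvPowerSeries (Fin 2) R)] with hg1
      have hLB0 : LB g0 1 := LB_one (constantCoeff_gX hu0 0)
      have hLB1 : LB g1 1 := LB_one (constantCoeff_gX hu0 1)
      have hc : ∀ e : Fin 2 →₀ ℕ, coeff m (g0 ^ e 0 * g1 ^ e 1)
          = coeff (Finsupp.single 0 (m 0)) (g0 ^ e 0)
            * coeff (Finsupp.single 1 (m 1)) (g1 ^ e 1) :=
        fun e => coeff_mul_onVar _ _ ((onVar_gX 0).pow _) ((onVar_gX 1).pow _) m
      have hmm2 : m ∈ Finset.Iic (Finsupp.equivFunOnFinite.symm fun _ : Fin 2 => dg m) :=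
        mem_IicE.2 (apply_le_dg m)
      have hmain : coeff m (g0 ^ m 0 * g1 ^ m 1) = u1 ^ (N + 1) := by
        rw [hc m, lead_gX hu0, lead_gX hu0, ← pow_add, ← dg2 m, hdm]
      have claim2 : coeff m (msubst F ![g0, g1]) - u1 ^ (N + 1) * coeff m F
          = coeff m (msubst G ![g0, g1]) - u1 ^ (N + 1) * coeff m G := by
        rw [coeff_msubst, coeff_msubst]
        simp only [prod_fin2]
        rw [Finset.sum_eq_sum_sdiff_singleton_add hmm2, Finset.sum_eq_sum_sdiff_singleton_add hmm2]
        rw [hmain]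
        have hdiff : ∑ e ∈ Finset.Iic (Finsupp.equivFunOnFinite.symm fun _ : Fin 2 => dg m) \
              {m}, coeff e F * coeff m (g0 ^ e 0 * g1 ^ e 1)
            = ∑ e ∈ Finset.Iic (Finsupp.equivFunOnFinite.symm fun _ : Fin 2 => dg m) \
              {m}, coeff e G * coeff m (g0 ^ e 0 * g1 ^ e 1) := by
          apply Finset.sum_congr rfl
          intro e he
          rw [Finset.mem_sdiff, Finset.mem_singleton] at he
          rcases Nat.lt_or_ge (dg e) (N + 1) with hlt | hge2
          · rw [ih e (by omega)]
          · have hce : coeff m (g0 ^ e 0 * g1 ^ e 1) = 0 := by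
              rcases Nat.lt_or_ge (N + 1) (dg e) with hgt | hle2
              · exact LB_mul (LB_pow hLB0 (e 0)) (LB_pow hLB1 (e 1)) m
                  (by have h1 := dg2 e; omega)
              · have hdge : dg e = N + 1 := by omega
                rw [hc e]
                have h01 : m 0 < e 0 ∨ m 1 < e 1 := by
                  by_contra hcon
                  push_neg at hcon
                  apply he.2
                  have d1 := dg2 e
                  have d2 := dg2 m
                  exact fin2_ext (by omega) (by omega)
                rcases h01 with h | h
                · rw [LB_pow hLB0 (e 0) _ (by rw [dg_single]; omega), zero_mul]
                · rw [LB_pow hLB1 (e 1) _ (by rw [dg_single]; omega), mul_zero]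
            rw [hce, mul_zero, mul_zero]
        rw [hdiff]
        ring
      have e3 := congrArg (coeff m) hFu.2
      have e4 := congrArg (coeff m) hGu.2
      have hzero : (u1 * (1 - u1 ^ N)) * (coeff m F - coeff m G) = 0 := by
        linear_combination claim2 - claim1 + e3 - e4
      rcases mul_eq_zero.mp hzero with h | h
      · exact absurd h (mul_ne_zero hu1ne (sub_ne_zero.mpr (hu1nr N hN).symm))
      · exact sub_eq_zero.mp h
  exact MvPowerSeries.ext fun m => key (dg m) m le_rfl

end Aux12

namespace Aux12

lemma map_tsum' {ι : Type*} {Cp : Type*} [NormedField Cp]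
    (s t : Cp → Cp) (hst : ∀ x, t (s x) = x)
    (hs : ∀ x y : Cp, s (x + y) = s x + s y) (ht : ∀ x y : Cp, t (x + y) = t x + t y)
    (hsc : Continuous s) (htc : Continuous t) (a : ι → Cp) :
    s (∑' i, a i) = ∑' i, s (a i) := by
  set S : Cp →+ Cp := AddMonoidHom.mk' s hs with hS
  set T : Cp →+ Cp := AddMonoidHom.mk' t ht with hT
  have hs0 : s 0 = 0 := map_zero S
  by_cases h : Summable a
  · exact (h.hasSum.map S hsc).tsum_eq.symm
  · have h2 : ¬ Summable (fun i => s (a i)) := by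
      intro hsm
      apply h
      have := hsm.map T htc
      have heq : (⇑T ∘ fun i => s (a i)) = a := by
        funext i
        simp [hT, hst]
      rwa [heq] at this
    rw [tsum_eq_zero_of_not_summable h, tsum_eq_zero_of_not_summable h2, hs0]

end Aux12

/-- If two formal group laws over `O_K` have infinitely many torsion points in
common, then they are equal (given a Galois element acting on the torsion of `F` as
a stable endomorphism, and the rigidity property for `G`). -/
theorem stmt12 (hnorm : ∀ x : ℚ_[p], ‖algebraMap ℚ_[p] Cp x‖ = ‖x‖)
    (F G : MvPowerSeries (Fin 2) (integralClosure ℤ_[p] K))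
    (hF : IsFGL F) (hG : IsFGL G)
    (u : PS (integralClosure ℤ_[p] K)) (huE : IsEndoFGL F u) (huS : Stable u)
    (σ : Cp ≃ₐ[K] Cp) (hσiso : Isometry σ)
    (hσ : ∀ z ∈ Tors (intEmb p K Cp) F, σ z = eval1 (intEmb p K Cp) u z)
    (hrigG : ∀ w : PS (integralClosure ℤ_[p] K), constantCoeff w = 0 →
      ({z ∈ Tors (intEmb p K Cp) G |
        eval1 (intEmb p K Cp) w z ∈ Tors (intEmb p K Cp) G}.Infinite) → IsEndoFGL G w)
    (hinter : (Tors (intEmb p K Cp) F ∩ Tors (intEmb p K Cp) G).Infinite) :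
    F = G := by
  classical
  set φ := intEmb p K Cp with hφ
  -- σ commutes with evaluation of power series with coefficients in O_K
  have hfix : ∀ c : (integralClosure ℤ_[p] K), σ (φ c) = φ c := by
    intro c
    exact σ.commutes _
  have hevalM : ∀ {k : ℕ} (f : MvPowerSeries (Fin k) (integralClosure ℤ_[p] K))
      (z : Fin k → Cp), σ (evalM φ f z) = evalM φ f (fun i => σ (z i)) := by
    intro k f z
    have hsymm : Isometry ⇑σ.symm := by
      intro x y
      rw [← hσiso (σ.symm x) (σ.symm y)]
      simp
    rw [evalM, evalM,
      Aux12.map_tsum' ⇑σ ⇑σ.symm σ.symm_apply_apply (map_add σ) (map_add σ.symm)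
        hσiso.continuous hsymm.continuous]
    apply tsum_congr
    intro m
    rw [map_mul, hfix, map_prod]
    simp only [map_pow]
  have haddG : ∀ x y : Cp, σ (addF φ G x y) = addF φ G (σ x) (σ y) := by
    intro x y
    rw [addF, addF, hevalM]
    congr 1
    funext i
    fin_cases i <;> simp
  have hns : ∀ (n : ℕ) (z : Cp), σ (nsmulF φ G n z) = nsmulF φ G n (σ z) := by
    intro n
    induction n with
    | zero => intro z; simpa [nsmulF] using map_zero σ
    | succ n ihn =>
      intro z
      rw [nsmulF, nsmulF, haddG, ihn]
  have hnormσ : ∀ w : Cp, ‖σ w‖ = ‖w‖ := by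
    intro w
    calc ‖σ w‖ = dist (σ w) (σ 0) := by rw [map_zero, dist_zero_right]
      _ = dist w 0 := hσiso.dist_eq w 0
      _ = ‖w‖ := dist_zero_right w
  have hTorsG : ∀ z ∈ Tors φ G, σ z ∈ Tors φ G := by
    rintro z ⟨hz1, n, hn, hzn⟩
    refine ⟨by rw [hnormσ]; exact hz1, n, hn, ?_⟩
    rw [← hns, hzn, map_zero]
  have hsub : (Tors φ F ∩ Tors φ G) ⊆
      {z ∈ Tors φ G | eval1 φ u z ∈ Tors φ G} := by
    rintro z ⟨hzF, hzG⟩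
    refine ⟨hzG, ?_⟩
    rw [← hσ z hzF]
    exact hTorsG z hzG
  have hGu : IsEndoFGL G u := hrigG u huS.1 (hinter.mono hsub)
  exact Aux12.rigidity hF hG huS huE hGu
end
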